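/- arXiv:0809.0245 — 4 statements merged into one kernel-verified Lean document; each statement's English description precedes it below -/
import Mathlib

section
/- Let R be the root system of a finite-dimensional complex simple Lie algebra with a fixed set of positive roots R⁺ and highest root θ. If λ is a dominant integral weight with λ ≤ θ (i.e., θ - λ is a nonnegative integer combination of simple roots), then either λ = 0 or λ is a root. -/
/-!
Write `lam = μ - ν` with `μ = θ` a root and `ν` a sum of simple roots. If `ν ≠ 0` then `⟪ν, ν⟫ > 0`,
so some simple root `α` occurring in `ν` has `⟪α, ν⟫ > 0`; dominance of `lam` then gives `⟪α, μ⟫ > 0`,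
so `μ - α` is again a root (or zero), and `α` can be removed from `ν`. The descent ends either with
`ν = 0`, where `lam = μ` is a root, or with `μ = 0`, where `⟪lam, lam⟫ = -⟪lam, ν⟫ ≤ 0` forces `lam = 0`.
-/

open RealInnerProductSpace

structure RootSys (n : ℕ) where
  R : Set (EuclideanSpace ℝ (Fin n))
  finite : R.Finite
  zero_not_mem : (0 : EuclideanSpace ℝ (Fin n)) ∉ R
  spans : Submodule.span ℝ R = ⊤
  neg_mem : ∀ α ∈ R, -α ∈ R
  reduced : ∀ α ∈ R, ∀ t : ℝ, t • α ∈ R → t = 1 ∨ t = -1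
  reflect_mem : ∀ α ∈ R, ∀ β ∈ R, β - (2 * ⟪α, β⟫ / ⟪α, α⟫) • α ∈ R
  crystal : ∀ α ∈ R, ∀ β ∈ R, ∃ k : ℤ, 2 * ⟪α, β⟫ / ⟪α, α⟫ = (k : ℝ)
  irreducible : ∀ S ⊆ R, (∀ α ∈ S, ∀ β ∈ R \ S, ⟪α, β⟫ = 0) → S = ∅ ∨ S = R

structure BasedRootSys (n : ℕ) extends RootSys n where
  simple : Fin n → EuclideanSpace ℝ (Fin n)
  simple_mem : ∀ i, simple i ∈ R
  simple_indep : LinearIndependent ℝ simple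
  pos_or_neg : ∀ α ∈ R, α ∈ AddSubmonoid.closure (Set.range simple) ∨
      -α ∈ AddSubmonoid.closure (Set.range simple)

namespace BasedRootSys

variable {n : ℕ} (RS : BasedRootSys n)

/-- `Q⁺`, the nonnegative integer span of the simple roots. -/
noncomputable def Qplus : AddSubmonoid (EuclideanSpace ℝ (Fin n)) :=
  AddSubmonoid.closure (Set.range RS.simple)

/-- The dominance order. -/
def le (α β : EuclideanSpace ℝ (Fin n)) : Prop := β - α ∈ RS.Qplus

/-- The positive roots. -/
def Rpos : Set (EuclideanSpace ℝ (Fin n)) := {α ∈ RS.R | α ∈ RS.Qplus}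

end BasedRootSys

lemma Multiset.exists_mem_inner_sum_pos {E : Type*} [NormedAddCommGroup E] [InnerProductSpace ℝ E]
    {s : Multiset E} (hs : s.sum ≠ 0) : ∃ α ∈ s, 0 < ⟪α, s.sum⟫ := by
  by_contra! h
  have hnonpos : ⟪s.sum, s.sum⟫ ≤ 0 :=
    Multiset.sum_induction (⟪·, s.sum⟫ ≤ 0) s
      (fun a b ha hb => by rw [inner_add_left]; linarith) (by simp) h
  exact hs (real_inner_self_nonpos.1 hnonpos)

namespace RootSys

variable {n : ℕ} (RS : RootSys n) {α β : EuclideanSpace ℝ (Fin n)}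

lemma ne_zero_of_mem (hα : α ∈ RS.R) : α ≠ 0 :=
  fun h => RS.zero_not_mem (h ▸ hα)

lemma inner_self_pos (hα : α ∈ RS.R) : 0 < ⟪α, α⟫ :=
  real_inner_self_pos.2 (RS.ne_zero_of_mem hα)

lemma eq_of_inner_eq_norm_mul (hα : α ∈ RS.R) (hβ : β ∈ RS.R) (h : ⟪α, β⟫ = ‖α‖ * ‖β‖) :
    β = α := by
  have hα0 : 0 < ‖α‖ := norm_pos_iff.2 (RS.ne_zero_of_mem hα)
  have hβα : β = (‖β‖ / ‖α‖) • α := by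
    rw [div_eq_inv_mul, mul_smul, inner_eq_norm_mul_iff_real.1 h, smul_smul,
      inv_mul_cancel₀ hα0.ne', one_smul]
  have hpos : 0 < ‖β‖ / ‖α‖ := div_pos (norm_pos_iff.2 (RS.ne_zero_of_mem hβ)) hα0
  rcases RS.reduced α hα _ (hβα ▸ hβ) with h1 | h1
  · rw [hβα, h1, one_smul]
  · linarith

lemma cartan_eq_one_or_cartan_eq_one (hα : α ∈ RS.R) (hβ : β ∈ RS.R) (hpos : 0 < ⟪α, β⟫)
    (hne : β ≠ α) : 2 * ⟪α, β⟫ / ⟪α, α⟫ = 1 ∨ 2 * ⟪β, α⟫ / ⟪β, β⟫ = 1 := by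
  obtain ⟨k, hk⟩ := RS.crystal α hα β hβ
  obtain ⟨l, hl⟩ := RS.crystal β hβ α hα
  have hαα := RS.inner_self_pos hα
  have hββ := RS.inner_self_pos hβ
  rw [real_inner_comm] at hl
  rw [real_inner_comm α β]
  have hk0 : (0 : ℝ) < k := hk ▸ by positivity
  have hl0 : (0 : ℝ) < l := hl ▸ by positivity
  rw [hk, hl]
  by_contra! hne1
  have hk2 : (2 : ℝ) ≤ k := by
    have : k ≠ 1 := by exact_mod_cast hne1.1
    have : 0 < k := by exact_mod_cast hk0
    exact_mod_cast (show 2 ≤ k by omega)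
  have hl2 : (2 : ℝ) ≤ l := by
    have : l ≠ 1 := by exact_mod_cast hne1.2
    have : 0 < l := by exact_mod_cast hl0
    exact_mod_cast (show 2 ≤ l by omega)
  rw [div_eq_iff hαα.ne'] at hk
  rw [div_eq_iff hββ.ne'] at hl
  rw [real_inner_self_eq_norm_sq] at hk hl
  -- both Cartan integers being at least 2 forces equality in Cauchy–Schwarz
  refine hne (RS.eq_of_inner_eq_norm_mul hα hβ (le_antisymm (real_inner_le_norm α β) ?_))
  have hαβ : ‖α‖ ^ 2 ≤ ⟪α, β⟫ := by nlinarith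
  have hβα : ‖β‖ ^ 2 ≤ ⟪α, β⟫ := by nlinarith
  have hsq : (‖α‖ * ‖β‖) ^ 2 ≤ ⟪α, β⟫ ^ 2 := by
    rw [mul_pow, sq ⟪α, β⟫]
    exact mul_le_mul hαβ hβα (sq_nonneg _) hpos.le
  exact (pow_le_pow_iff_left₀ (by positivity) hpos.le two_ne_zero).1 hsq

lemma sub_mem_of_inner_pos (hα : α ∈ RS.R) (hβ : β ∈ RS.R) (hpos : 0 < ⟪α, β⟫)
    (hne : β ≠ α) : β - α ∈ RS.R := by
  rcases RS.cartan_eq_one_or_cartan_eq_one hα hβ hpos hne with h | h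
  · have := RS.reflect_mem α hα β hβ
    rwa [h, one_smul] at this
  · have := RS.neg_mem _ (RS.reflect_mem β hβ α hα)
    rwa [h, one_smul, neg_sub] at this

lemma eq_zero_or_mem_of_eq_add_sum {S : Set (EuclideanSpace ℝ (Fin n))} (hS : S ⊆ RS.R)
    {lam : EuclideanSpace ℝ (Fin n)} (hdom : ∀ α ∈ S, 0 ≤ ⟪lam, α⟫)
    (s : Multiset (EuclideanSpace ℝ (Fin n))) (hsS : ∀ α ∈ s, α ∈ S)
    {μ : EuclideanSpace ℝ (Fin n)} (hμ : μ = 0 ∨ μ ∈ RS.R) (hμs : μ = lam + s.sum) :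
    lam = 0 ∨ lam ∈ RS.R := by
  induction s using Multiset.strongInductionOn generalizing μ with
  | ih s ih =>
  have hlam_s : 0 ≤ ⟪lam, s.sum⟫ :=
    Multiset.sum_induction (0 ≤ ⟪lam, ·⟫) s
      (fun a b ha hb => by rw [inner_add_right]; linarith) (by simp)
      (fun α hα => hdom α (hsS α hα))
  rcases hμ with rfl | hμR
  · have hlam : lam = -s.sum := eq_neg_of_add_eq_zero_left hμs.symm
    refine .inl (real_inner_self_nonpos.1 ?_)
    nth_rw 2 [hlam]
    rw [inner_neg_right]
    linarith
  by_cases hs0 : s.sum = 0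
  · rw [hs0, add_zero] at hμs
    exact .inr (hμs ▸ hμR)
  obtain ⟨α, hαs, hαpos⟩ := Multiset.exists_mem_inner_sum_pos hs0
  have hαR := hS (hsS α hαs)
  have hαμ : 0 < ⟪α, μ⟫ := by
    rw [hμs, inner_add_right, real_inner_comm]
    linarith [hdom α (hsS α hαs)]
  have hμα : μ - α = 0 ∨ μ - α ∈ RS.R := by
    by_cases he : μ = α
    · exact .inl (sub_eq_zero.2 he)
    · exact .inr (RS.sub_mem_of_inner_pos hαR hμR hαμ he)
  refine ih _ (Multiset.erase_lt.2 hαs) (fun β hβ => hsS β (Multiset.mem_of_mem_erase hβ)) hμα ?_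
  rw [hμs, ← Multiset.sum_erase hαs]
  abel

lemma eq_zero_or_mem_of_sub_mem_closure {S : Set (EuclideanSpace ℝ (Fin n))} (hS : S ⊆ RS.R)
    {lam μ : EuclideanSpace ℝ (Fin n)} (hdom : ∀ α ∈ S, 0 ≤ ⟪lam, α⟫)
    (hμ : μ = 0 ∨ μ ∈ RS.R) (hle : μ - lam ∈ AddSubmonoid.closure S) :
    lam = 0 ∨ lam ∈ RS.R := by
  obtain ⟨s, hsS, hs⟩ := AddSubmonoid.exists_multiset_of_mem_closure hle
  exact RS.eq_zero_or_mem_of_eq_add_sum hS hdom s hsS hμ (by rw [hs]; abel)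

end RootSys

theorem stmt_0_general {n : ℕ} (RS : BasedRootSys n) (θ lam : EuclideanSpace ℝ (Fin n))
    (hθpos : θ ∈ RS.Rpos)
    (hdomint : ∀ i : Fin n,
      ∃ k : ℕ, 2 * ⟪lam, RS.simple i⟫ / ⟪RS.simple i, RS.simple i⟫ = (k : ℝ))
    (hle : RS.le lam θ) :
    lam = 0 ∨ lam ∈ RS.R := by
  have hdom : ∀ α ∈ Set.range RS.simple, 0 ≤ ⟪lam, α⟫ := by
    rintro _ ⟨i, rfl⟩
    obtain ⟨k, hk⟩ := hdomint i
    have hii := RS.inner_self_pos (RS.simple_mem i)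
    have h2 := mul_nonneg (hk ▸ k.cast_nonneg) hii.le
    rw [div_mul_cancel₀ _ hii.ne'] at h2
    linarith
  exact RS.eq_zero_or_mem_of_sub_mem_closure (Set.range_subset_iff.2 RS.simple_mem) hdom
    (.inr hθpos.1) hle

/-- If `λ` is a dominant integral weight with `λ ≤ θ` (θ the highest root),
then either `λ = 0` or `λ` is a root. -/
theorem stmt_0 {n : ℕ} (RS : BasedRootSys n) (θ lam : EuclideanSpace ℝ (Fin n))
    (hθpos : θ ∈ RS.Rpos) (hθmax : ∀ α ∈ RS.R, RS.le α θ)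
    (hdomint : ∀ i : Fin n,
      ∃ k : ℕ, 2 * ⟪lam, RS.simple i⟫ / ⟪RS.simple i, RS.simple i⟫ = (k : ℝ))
    (hle : RS.le lam θ) :
    lam = 0 ∨ lam ∈ RS.R :=
  stmt_0_general RS θ lam hθpos hdomint hle
end

section
/- The map A ↦ Φ(A) = {α ∈ R⁺ : ∃ β ∈ A, α ≥ β} is a bijection between the set of J-antichains in R⁺ and the set of J-ideals in R⁺, with inverse sending an ideal Φ to its set of minimal elements. -/
open RealInnerProductSpace

namespace BasedRootSys

variable {n : ℕ} (RS : BasedRootSys n)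

/-- `R(J)`, the roots supported on `J`. -/
noncomputable def RJ (J : Set (Fin n)) : Set (EuclideanSpace ℝ (Fin n)) :=
  {α ∈ RS.R | α ∈ AddSubgroup.closure (RS.simple '' J)}

/-- `R⁺(J)`, the positive roots supported on `J`. -/
noncomputable def RposJ (J : Set (Fin n)) : Set (EuclideanSpace ℝ (Fin n)) :=
  RS.RJ J ∩ RS.Rpos

/-- A `J`-antichain in `R⁺`. -/
def IsJAntichain (J : Set (Fin n)) (A : Set (EuclideanSpace ℝ (Fin n))) : Prop :=
  A ⊆ RS.Rpos ∧ A ∩ RS.RposJ J = ∅ ∧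
  (∀ α ∈ A, ∀ β ∈ A, α ≠ β → ¬ RS.le α β) ∧
  (∀ α ∈ A, ∀ j ∈ J, α - RS.simple j ∉ RS.R)

/-- The ideal `Φ(A)` generated by `A`. -/
def PhiOf (A : Set (EuclideanSpace ℝ (Fin n))) : Set (EuclideanSpace ℝ (Fin n)) :=
  {α ∈ RS.Rpos | ∃ β ∈ A, RS.le β α}

/-- A `J`-ideal in `R⁺`. -/
def IsJIdeal (J : Set (Fin n)) (Φ : Set (EuclideanSpace ℝ (Fin n))) : Prop :=
  Φ ⊆ RS.Rpos ∧ Φ ∩ RS.RposJ J = ∅ ∧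
  (∀ α ∈ Φ, ∀ β, (β ∈ RS.Rpos ∨ β ∈ RS.RJ J) → α + β ∈ RS.R → α + β ∈ Φ)

/-- The set of minimal elements of a subset of `R⁺` in the dominance order. -/
def minimals (Φ : Set (EuclideanSpace ℝ (Fin n))) : Set (EuclideanSpace ℝ (Fin n)) :=
  {α ∈ Φ | ∀ β ∈ Φ, RS.le β α → β = α}

end BasedRootSys

/-!
Closure of `Φ(A)` under adding positive roots is immediate; the content is closure under adding
negative roots of `R(J)`, i.e. under descending inside `R⁺` by `J`-supported elements of `Q⁺`.
Positive roots `μ ≤ α` are joined by a chain of roots whose consecutive members differ by simple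
roots from the support of `α - μ`, so it suffices to descend by one `αⱼ`, `j ∈ J`. An element `β`
of a `J`-antichain has `β - αⱼ ∉ R` and `⟪β, αⱼ⟫ ≤ 0`, and such a `β` below a root `α` with
`α - αⱼ ∈ R` stays below `α - αⱼ`. Conversely, `β - αⱼ` cannot lie in an ideal of which `β` is a
minimal element, every element of a (finite) ideal dominates a minimal one, and the same chains
show that an ideal is upward closed in `R⁺`.
-/

namespace BasedRootSys

variable {n : ℕ} (RS : BasedRootSys n)

local notation "E" => EuclideanSpace ℝ (Fin n)

section Geometry

lemma ne_zero_of_mem {α : E} (hα : α ∈ RS.R) : α ≠ 0 :=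
  fun h => RS.zero_not_mem (h ▸ hα)

lemma inner_self_pos_of_mem {α : E} (hα : α ∈ RS.R) : 0 < ⟪α, α⟫ :=
  real_inner_self_pos.2 (RS.ne_zero_of_mem hα)

/-- Strict Cauchy–Schwarz: in a reduced root system only `±α` are proportional to `α`. -/
lemma inner_sq_lt_of_mem {α β : E} (hα : α ∈ RS.R) (hβ : β ∈ RS.R) (h₁ : β ≠ α)
    (h₂ : β ≠ -α) : ⟪α, β⟫ ^ 2 < ⟪α, α⟫ * ⟪β, β⟫ := by
  have hne : |⟪α, β⟫| ≠ ‖α‖ * ‖β‖ := by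
    intro h
    obtain ⟨r, -, rfl⟩ := (norm_inner_eq_norm_iff (𝕜 := ℝ) (RS.ne_zero_of_mem hα)
      (RS.ne_zero_of_mem hβ)).1 (by rwa [Real.norm_eq_abs])
    rcases RS.reduced α hα r hβ with rfl | rfl <;> simp at h₁ h₂
  have hlt := lt_of_le_of_ne (abs_real_inner_le_norm α β) hne
  calc ⟪α, β⟫ ^ 2 = |⟪α, β⟫| ^ 2 := (sq_abs _).symm
    _ < (‖α‖ * ‖β‖) ^ 2 := pow_lt_pow_left₀ hlt (abs_nonneg _) two_ne_zero
    _ = ⟪α, α⟫ * ⟪β, β⟫ := by rw [real_inner_self_eq_norm_sq, real_inner_self_eq_norm_sq]; ring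

/-- The Cartan integers `⟨β, α^∨⟩` and `⟨α, β^∨⟩` are positive with product `< 4`, so one of
them is `1` and the corresponding reflection sends one root to `±(α - β)`. -/
lemma eq_or_sub_mem_of_inner_pos {α β : E} (hα : α ∈ RS.R) (hβ : β ∈ RS.R)
    (h : 0 < ⟪α, β⟫) : α = β ∨ α - β ∈ RS.R := by
  by_cases hαβ : α = β
  · exact Or.inl hαβ
  right
  have hαα := RS.inner_self_pos_of_mem hα
  have hββ := RS.inner_self_pos_of_mem hβ
  obtain ⟨k, hk⟩ := RS.crystal α hα β hβ
  obtain ⟨l, hl⟩ := RS.crystal β hβ α hα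
  have hk' : 2 * ⟪α, β⟫ = k * ⟪α, α⟫ := (div_eq_iff hαα.ne').1 hk
  have hl' : 2 * ⟪α, β⟫ = l * ⟪β, β⟫ := by
    rw [real_inner_comm]; exact (div_eq_iff hββ.ne').1 hl
  have hcs := RS.inner_sq_lt_of_mem hα hβ (Ne.symm hαβ) (by
    rintro rfl; rw [inner_neg_right] at h; linarith)
  have hk0 : (0 : ℝ) < k := by nlinarith
  have hl0 : (0 : ℝ) < l := by nlinarith
  have hkl : (k : ℝ) * l < 4 := by nlinarith [mul_pos hαα hββ]
  have hkl' : k = 1 ∨ l = 1 := by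
    have hk1 : (0 : ℤ) < k := by exact_mod_cast hk0
    have hl1 : (0 : ℤ) < l := by exact_mod_cast hl0
    have : k * l < 4 := by exact_mod_cast hkl
    by_contra! h
    have hk2 : 2 ≤ k := by omega
    have hl2 : 2 ≤ l := by omega
    nlinarith
  rcases hkl' with rfl | rfl
  · have h' := RS.reflect_mem α hα β hβ
    rw [hk, Int.cast_one, one_smul] at h'
    simpa using RS.neg_mem _ h'
  · have h' := RS.reflect_mem β hβ α hα
    rwa [hl, Int.cast_one, one_smul] at h'

lemma eq_neg_or_add_mem_of_inner_neg {α β : E} (hα : α ∈ RS.R) (hβ : β ∈ RS.R)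
    (h : ⟪α, β⟫ < 0) : α = -β ∨ α + β ∈ RS.R := by
  simpa [sub_eq_add_neg] using
    RS.eq_or_sub_mem_of_inner_pos hα (RS.neg_mem β hβ) (by rw [inner_neg_right]; linarith)

end Geometry

section Coordinates

lemma top_le_span_simple : ⊤ ≤ Submodule.span ℝ (Set.range RS.simple) := by
  rw [← RS.spans, Submodule.span_le]
  have hQ : AddSubmonoid.closure (Set.range RS.simple) ≤
      (Submodule.span ℝ (Set.range RS.simple)).toAddSubmonoid :=
    AddSubmonoid.closure_le.2 Submodule.subset_span
  intro α hα
  rcases RS.pos_or_neg α hα with h | h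
  · exact hQ h
  · simpa using Submodule.neg_mem _ (hQ h)

noncomputable def basis : Module.Basis (Fin n) ℝ E :=
  .mk RS.simple_indep RS.top_le_span_simple

noncomputable def coord (i : Fin n) : E →ₗ[ℝ] ℝ := RS.basis.coord i

lemma coord_simple (i j : Fin n) : RS.coord i (RS.simple j) = if j = i then 1 else 0 :=
  Module.Basis.mk_coord_apply

@[simp] lemma coord_simple_self (i : Fin n) : RS.coord i (RS.simple i) = 1 := by
  simp [coord_simple]

lemma coord_simple_of_ne {i j : Fin n} (h : j ≠ i) : RS.coord i (RS.simple j) = 0 := by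
  simp [coord_simple, h]

lemma sum_coord_smul_simple (x : E) : ∑ i, RS.coord i x • RS.simple i = x := by
  simpa [coord, basis] using RS.basis.sum_repr x

lemma eq_zero_of_forall_coord_eq_zero {x : E} (h : ∀ i, RS.coord i x = 0) : x = 0 :=
  RS.basis.forall_coord_eq_zero_iff.1 h

lemma mem_Qplus_iff {x : E} : x ∈ RS.Qplus ↔ ∀ i, ∃ m : ℕ, RS.coord i x = m := by
  constructor
  · intro hx i
    obtain ⟨a, rfl⟩ := AddSubmonoid.mem_closure_range_iff_of_fintype.1 hx
    exact ⟨a i, by simp [coord_simple]⟩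
  · intro h
    choose m hm using h
    refine AddSubmonoid.mem_closure_range_iff_of_fintype.2 ⟨m, ?_⟩
    conv_lhs => rw [← RS.sum_coord_smul_simple x]
    simp [hm, Nat.cast_smul_eq_nsmul]

lemma coord_nonneg {x : E} (hx : x ∈ RS.Qplus) (i : Fin n) : 0 ≤ RS.coord i x := by
  obtain ⟨m, hm⟩ := RS.mem_Qplus_iff.1 hx i
  rw [hm]; positivity

lemma coord_eq_zero_or_one_le {x : E} (hx : x ∈ RS.Qplus) (i : Fin n) :
    RS.coord i x = 0 ∨ 1 ≤ RS.coord i x := by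
  obtain ⟨m, hm⟩ := RS.mem_Qplus_iff.1 hx i
  rcases m.eq_zero_or_pos with rfl | h
  · exact Or.inl (by simpa using hm)
  · exact Or.inr (by rw [hm]; exact_mod_cast h)

lemma simple_mem_Qplus (i : Fin n) : RS.simple i ∈ RS.Qplus :=
  AddSubmonoid.subset_closure (Set.mem_range_self i)

lemma simple_mem_Rpos (i : Fin n) : RS.simple i ∈ RS.Rpos :=
  ⟨RS.simple_mem i, RS.simple_mem_Qplus i⟩

lemma neg_simple_notMem_Qplus (i : Fin n) : -RS.simple i ∉ RS.Qplus := by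
  intro h
  have := RS.coord_nonneg h i
  simp at this
  linarith

lemma sub_simple_mem_Qplus {x : E} (hx : x ∈ RS.Qplus) {i : Fin n} (hi : 1 ≤ RS.coord i x) :
    x - RS.simple i ∈ RS.Qplus := by
  refine RS.mem_Qplus_iff.2 fun k => ?_
  obtain ⟨m, hm⟩ := RS.mem_Qplus_iff.1 hx k
  rcases eq_or_ne i k with rfl | hik
  · have hm1 : 1 ≤ m := by rw [hm] at hi; exact_mod_cast hi
    exact ⟨m - 1, by simp [hm, hm1]⟩
  · exact ⟨m, by simp [hm, coord_simple_of_ne RS hik]⟩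

lemma notMem_of_coord_pos_of_coord_neg {x : E} {i j : Fin n} (hi : 0 < RS.coord i x)
    (hj : RS.coord j x < 0) : x ∉ RS.R := by
  intro hx
  rcases RS.pos_or_neg x hx with h | h
  · linarith [RS.coord_nonneg h j]
  · have := RS.coord_nonneg h i
    rw [map_neg] at this
    linarith

lemma simple_sub_simple_notMem {i j : Fin n} (hij : i ≠ j) :
    RS.simple i - RS.simple j ∉ RS.R :=
  RS.notMem_of_coord_pos_of_coord_neg (i := i) (j := j)
    (by simp [coord_simple_of_ne RS hij.symm]) (by simp [coord_simple_of_ne RS hij])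

lemma simple_sub_notMem {ν : E} (hν : ν ∈ RS.Qplus) (hν0 : ν ≠ 0) {j : Fin n}
    (hνj : RS.coord j ν = 0) : RS.simple j - ν ∉ RS.R := by
  obtain ⟨k, hk⟩ : ∃ k, RS.coord k ν ≠ 0 := by
    by_contra! h
    exact hν0 (RS.eq_zero_of_forall_coord_eq_zero h)
  have hkj : k ≠ j := by rintro rfl; exact hk hνj
  refine RS.notMem_of_coord_pos_of_coord_neg (i := j) (j := k) (by simp [hνj]) ?_
  simp only [map_sub, coord_simple_of_ne RS hkj.symm, zero_sub, neg_neg_iff_pos]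
  exact lt_of_le_of_ne (RS.coord_nonneg hν k) (Ne.symm hk)

lemma simple_inner_nonpos {i j : Fin n} (hij : i ≠ j) : ⟪RS.simple i, RS.simple j⟫ ≤ 0 := by
  by_contra! h
  rcases RS.eq_or_sub_mem_of_inner_pos (RS.simple_mem i) (RS.simple_mem j) h with h' | h'
  · exact hij (RS.simple_indep.injective h')
  · exact RS.simple_sub_simple_notMem hij h'

lemma exists_coord_inner_pos {x y : E} (hx : x ∈ RS.Qplus) (h : 0 < ⟪y, x⟫) :
    ∃ i, 1 ≤ RS.coord i x ∧ 0 < ⟪y, RS.simple i⟫ := by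
  rw [← RS.sum_coord_smul_simple x, inner_sum] at h
  obtain ⟨i, -, hi⟩ := Finset.exists_lt_of_sum_lt (s := Finset.univ) (f := fun _ => 0)
    (g := fun i => ⟪y, RS.coord i x • RS.simple i⟫) (by simpa using h)
  rw [real_inner_smul_right] at hi
  have hpos := (pos_and_pos_or_neg_and_neg_of_mul_pos hi).resolve_right
    fun h' => (RS.coord_nonneg hx i).not_gt h'.1
  exact ⟨i, (RS.coord_eq_zero_or_one_le hx i).resolve_left hpos.1.ne', hpos.2⟩

noncomputable def height : E →ₗ[ℝ] ℝ := RS.basis.sumCoords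

lemma height_eq_sum_coord (x : E) : RS.height x = ∑ i, RS.coord i x := by
  simp [height, coord]

@[simp] lemma height_simple (i : Fin n) : RS.height (RS.simple i) = 1 := by
  have := RS.basis.sumCoords_self_apply i
  rwa [basis, Module.Basis.mk_apply] at this

lemma height_nonneg {x : E} (hx : x ∈ RS.Qplus) : 0 ≤ RS.height x := by
  rw [height_eq_sum_coord]
  exact Finset.sum_nonneg fun i _ => RS.coord_nonneg hx i

lemma eq_zero_of_height_nonpos {x : E} (hx : x ∈ RS.Qplus) (h : RS.height x ≤ 0) : x = 0 := by
  rw [height_eq_sum_coord] at h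
  refine RS.eq_zero_of_forall_coord_eq_zero fun i => ?_
  exact (Finset.sum_eq_zero_iff_of_nonneg fun i _ => RS.coord_nonneg hx i).1
    (h.antisymm (Finset.sum_nonneg fun i _ => RS.coord_nonneg hx i)) i (Finset.mem_univ i)

def SupportedOn (J : Set (Fin n)) (x : E) : Prop := ∀ i ∉ J, RS.coord i x = 0

end Coordinates

variable {RS}

section Order

protected lemma le.refl (x : E) : RS.le x x := by
  simp [le, zero_mem]

protected lemma le.trans {x y z : E} (h₁ : RS.le x y) (h₂ : RS.le y z) : RS.le x z := by
  simpa [le] using add_mem h₂ h₁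

lemma le.height_le {x y : E} (h : RS.le x y) : RS.height x ≤ RS.height y := by
  have := RS.height_nonneg h
  rw [map_sub] at this
  linarith

lemma le.eq_of_height_le {x y : E} (h : RS.le x y) (h' : RS.height y ≤ RS.height x) : x = y :=
  (sub_eq_zero.1 (RS.eq_zero_of_height_nonpos h (by rw [map_sub]; linarith))).symm

protected lemma le.antisymm {x y : E} (h₁ : RS.le x y) (h₂ : RS.le y x) : x = y :=
  h₁.eq_of_height_le h₂.height_le

lemma le_add_of_mem_Qplus (x : E) {y : E} (hy : y ∈ RS.Qplus) : RS.le x (x + y) := by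
  simpa [le] using hy

lemma le.add_right {x y z : E} (h : RS.le x y) (hz : z ∈ RS.Qplus) : RS.le x (y + z) :=
  h.trans (le_add_of_mem_Qplus y hz)

lemma le.sub_simple {x y : E} {i : Fin n} (h : RS.le x y) (hi : 1 ≤ RS.coord i (y - x)) :
    RS.le x (y - RS.simple i) := by
  simpa [le, sub_right_comm] using RS.sub_simple_mem_Qplus h hi

lemma le.add_simple {x y : E} {i : Fin n} (h : RS.le x y) (hi : 1 ≤ RS.coord i (y - x)) :
    RS.le (x + RS.simple i) y := by
  simpa [le, sub_add_eq_sub_sub] using RS.sub_simple_mem_Qplus h hi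

end Order

section Support

lemma supportedOn_univ (x : E) : RS.SupportedOn Set.univ x := fun _ hi => absurd trivial hi

lemma supportedOn_of_mem_closure {J : Set (Fin n)} {x : E}
    (hx : x ∈ AddSubgroup.closure (RS.simple '' J)) : RS.SupportedOn J x := by
  induction hx using AddSubgroup.closure_induction with
  | mem y hy =>
    obtain ⟨j, hj, rfl⟩ := hy
    exact fun i hi => RS.coord_simple_of_ne fun h => hi (h ▸ hj)
  | zero => exact fun i _ => map_zero _
  | add x y _ _ hx hy => exact fun i hi => by rw [map_add, hx i hi, hy i hi, add_zero]
  | neg x _ hx => exact fun i hi => by rw [map_neg, hx i hi, neg_zero]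

lemma SupportedOn.mem_closure {J : Set (Fin n)} {x : E} (h : RS.SupportedOn J x)
    (hx : x ∈ RS.Qplus) : x ∈ AddSubgroup.closure (RS.simple '' J) := by
  rw [← RS.sum_coord_smul_simple x]
  refine sum_mem fun i _ => ?_
  by_cases hi : i ∈ J
  · obtain ⟨m, hm⟩ := RS.mem_Qplus_iff.1 hx i
    rw [hm, Nat.cast_smul_eq_nsmul]
    exact nsmul_mem (AddSubgroup.subset_closure (Set.mem_image_of_mem _ hi)) m
  · rw [h i hi, zero_smul]
    exact zero_mem _

lemma SupportedOn.mem_RposJ {J : Set (Fin n)} {x : E} (h : RS.SupportedOn J x)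
    (hx : x ∈ RS.Rpos) : x ∈ RS.RposJ J :=
  ⟨⟨hx.1, h.mem_closure hx.2⟩, hx⟩

lemma SupportedOn.of_le {J : Set (Fin n)} {x y : E} (hy : RS.SupportedOn J y)
    (hx : x ∈ RS.Qplus) (hxy : RS.le x y) : RS.SupportedOn J x := by
  intro i hi
  have h₁ := RS.coord_nonneg hx i
  have h₂ := RS.coord_nonneg hxy i
  rw [map_sub, hy i hi] at h₂
  linarith

lemma SupportedOn.sub_simple {J : Set (Fin n)} {x : E} (h : RS.SupportedOn J x) {i : Fin n}
    (hi : i ∈ J) : RS.SupportedOn J (x - RS.simple i) := by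
  intro k hk
  rw [map_sub, h k hk, RS.coord_simple_of_ne fun h : i = k => hk (h ▸ hi), sub_zero]

end Support

section Chains

/-- Since `‖α - μ‖² > 0`, some simple root `αᵢ` in the support of `α - μ` has
`⟪α, αᵢ⟫ > 0` or `⟪μ, αᵢ⟫ < 0`. -/
lemma exists_add_simple_mem_or_sub_simple_mem {μ α : E} (hμ : μ ∈ RS.Rpos) (hα : α ∈ RS.R)
    (hle : RS.le μ α) (hne : μ ≠ α) :
    ∃ i, 1 ≤ RS.coord i (α - μ) ∧ (μ + RS.simple i ∈ RS.R ∨ α - RS.simple i ∈ RS.R) := by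
  obtain ⟨i, hi, hpos⟩ :=
    RS.exists_coord_inner_pos hle (real_inner_self_pos.2 (sub_ne_zero.2 hne.symm))
  refine ⟨i, hi, ?_⟩
  rw [inner_sub_left] at hpos
  rcases lt_or_ge ⟪μ, RS.simple i⟫ 0 with hμi | hμi
  · refine Or.inl ((RS.eq_neg_or_add_mem_of_inner_neg hμ.1 (RS.simple_mem i) hμi).resolve_left ?_)
    rintro rfl
    exact RS.neg_simple_notMem_Qplus i hμ.2
  · refine Or.inr ((RS.eq_or_sub_mem_of_inner_pos hα (RS.simple_mem i) (by linarith)).resolve_left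
      ?_)
    rintro rfl
    have hμ0 : RS.le μ 0 := by simpa [le] using RS.sub_simple_mem_Qplus hle hi
    exact RS.ne_zero_of_mem hμ.1 (hμ0.antisymm (by simpa [le] using hμ.2))

/-- Positive roots `μ ≤ α` are joined by a chain of roots, each obtained from the previous one
by adding a simple root from the support of `α - μ`. -/
theorem le_induction {K : Set (Fin n)} {P : E → E → Prop} (refl : ∀ μ, P μ μ)
    (add_simple : ∀ μ α i, i ∈ K → μ ∈ RS.R → α ∈ RS.R → μ + RS.simple i ∈ RS.R →
      P (μ + RS.simple i) α → P μ α)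
    (sub_simple : ∀ μ α i, i ∈ K → μ ∈ RS.R → α ∈ RS.R → α - RS.simple i ∈ RS.R →
      P μ (α - RS.simple i) → P μ α)
    {μ α : E} (hμ : μ ∈ RS.Rpos) (hα : α ∈ RS.R) (hle : RS.le μ α)
    (hK : RS.SupportedOn K (α - μ)) : P μ α := by
  obtain ⟨N, hN⟩ := exists_nat_gt (RS.height (α - μ))
  induction N generalizing μ α with
  | zero => exact absurd hN (not_lt.2 (by exact_mod_cast RS.height_nonneg hle))
  | succ N ih =>
    rcases eq_or_ne μ α with rfl | hne
    · exact refl μ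
    obtain ⟨i, hi, hstep⟩ := exists_add_simple_mem_or_sub_simple_mem hμ hα hle hne
    have hiK : i ∈ K := by
      by_contra h
      rw [hK i h] at hi
      linarith
    have hN' : RS.height (α - μ - RS.simple i) < N := by
      rw [map_sub, height_simple]
      push_cast at hN
      linarith
    rcases hstep with h | h
    · refine add_simple μ α i hiK hμ.1 hα h
        (ih ⟨h, add_mem hμ.2 (RS.simple_mem_Qplus i)⟩ hα (hle.add_simple hi) ?_ ?_)
      · rw [sub_add_eq_sub_sub]; exact hK.sub_simple hiK
      · rwa [sub_add_eq_sub_sub]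
    · refine sub_simple μ α i hiK hμ.1 hα h (ih hμ h (hle.sub_simple hi) ?_ ?_)
      · rw [sub_right_comm]; exact hK.sub_simple hiK
      · rwa [sub_right_comm]

end Chains

section Minimal

/-- With `ζ = β + αᵢ - αⱼ` one has `⟪ζ, β + αᵢ⟫ = ‖β + αᵢ‖² - ⟪αⱼ, β + αᵢ⟫ > 0`, so `ζ` has
positive inner product with `β` or with `αᵢ`; if `ζ` were a root, this would make one of the
non-roots `αᵢ - αⱼ`, `β - αⱼ` a root. -/
lemma add_simple_sub_simple_notMem {β : E} {i j : Fin n} (hβ : β ∈ RS.Rpos) (hij : i ≠ j)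
    (hβj : ⟪β, RS.simple j⟫ ≤ 0) (hβj' : β - RS.simple j ∉ RS.R) :
    β + RS.simple i - RS.simple j ∉ RS.R := by
  intro hζ
  have hβi : β + RS.simple i ≠ 0 := by
    intro h
    exact RS.neg_simple_notMem_Qplus i (by rw [← eq_neg_of_add_eq_zero_left h]; exact hβ.2)
  have hpos : 0 < ⟪β + RS.simple i - RS.simple j, β⟫ +
      ⟪β + RS.simple i - RS.simple j, RS.simple i⟫ := by
    rw [← inner_add_right, inner_sub_left, inner_add_right (x := RS.simple j)]
    have := real_inner_self_pos.2 hβi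
    have := RS.simple_inner_nonpos hij.symm
    rw [real_inner_comm] at hβj
    linarith
  by_cases h : 0 < ⟪β + RS.simple i - RS.simple j, β⟫
  · rcases RS.eq_or_sub_mem_of_inner_pos hζ hβ.1 h with h' | h'
    · have : RS.simple i - RS.simple j = 0 := by rw [← sub_eq_zero.2 h']; abel
      exact hij (RS.simple_indep.injective (sub_eq_zero.1 this))
    · exact RS.simple_sub_simple_notMem hij (by convert h' using 1; abel)
  · rcases RS.eq_or_sub_mem_of_inner_pos hζ (RS.simple_mem i) (by linarith) with h' | h'
    · have : β - RS.simple j = 0 := by rw [← sub_eq_zero.2 h']; abel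
      rw [sub_eq_zero.1 this] at hβj
      linarith [RS.inner_self_pos_of_mem (RS.simple_mem j)]
    · exact hβj' (by convert h' using 1; abel)

/-- If the `αⱼ`-coordinate of `α - β` vanished, then `⟪β, α - αⱼ⟫ ≤ 0` would force
`⟪β, α - β⟫ < 0`, so `β` could be raised by a simple root `αᵢ`, `i ≠ j`, from the support of
`α - β` without losing the hypotheses on `β`. -/
theorem le_sub_simple_of_sub_simple_notMem {β α : E} {j : Fin n} (hβ : β ∈ RS.Rpos)
    (hβj : ⟪β, RS.simple j⟫ ≤ 0) (hβj' : β - RS.simple j ∉ RS.R) (hle : RS.le β α)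
    (hα : α - RS.simple j ∈ RS.R) : RS.le β (α - RS.simple j) := by
  obtain ⟨N, hN⟩ := exists_nat_gt (RS.height (α - β))
  induction N generalizing β with
  | zero => exact absurd hN (not_lt.2 (by exact_mod_cast RS.height_nonneg hle))
  | succ N ih =>
    refine (RS.coord_eq_zero_or_one_le hle j).elim (fun hj0 => ?_) hle.sub_simple
    have hne : α - β ≠ 0 := by
      intro h
      rw [sub_eq_zero] at h
      subst h
      exact hβj' hα
    have hβα : ⟪β, α - RS.simple j⟫ ≤ 0 := by
      by_contra! h
      rcases RS.eq_or_sub_mem_of_inner_pos hβ.1 hα h with rfl | h'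
      · simp at hj0
      · exact RS.simple_sub_notMem hle hne hj0 (by convert h' using 1; abel)
    have hneg : 0 < ⟪-β, α - β⟫ := by
      rw [inner_neg_left, show α - β = (α - RS.simple j) + RS.simple j - β by abel,
        inner_sub_right, inner_add_right]
      linarith [RS.inner_self_pos_of_mem hβ.1]
    obtain ⟨i, hi1, hβi⟩ := RS.exists_coord_inner_pos hle hneg
    rw [inner_neg_left, neg_pos] at hβi
    have hij : i ≠ j := by
      rintro rfl
      rw [hj0] at hi1
      linarith
    have hβi' : β + RS.simple i ∈ RS.R :=
      (RS.eq_neg_or_add_mem_of_inner_neg hβ.1 (RS.simple_mem i) hβi).resolve_left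
        (by rintro rfl; exact RS.neg_simple_notMem_Qplus i hβ.2)
    refine (le_add_of_mem_Qplus β (RS.simple_mem_Qplus i)).trans
      (ih ⟨hβi', add_mem hβ.2 (RS.simple_mem_Qplus i)⟩ ?_
        (add_simple_sub_simple_notMem hβ hij hβj hβj') (hle.add_simple hi1) ?_)
    · rw [inner_add_left]
      linarith [RS.simple_inner_nonpos hij]
    · rw [sub_add_eq_sub_sub, map_sub, height_simple]
      push_cast at hN
      linarith

end Minimal

section Antichain

variable {J : Set (Fin n)} {A : Set (EuclideanSpace ℝ (Fin n))}

lemma mem_PhiOf_of_mem_of_le (hA : A ⊆ RS.Rpos) {β α : E} (hβ : β ∈ A) (hα : α ∈ RS.R)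
    (hle : RS.le β α) : α ∈ RS.PhiOf A :=
  ⟨⟨hα, by simpa using add_mem (hA hβ).2 hle⟩, β, hβ, hle⟩

lemma subset_PhiOf (hA : A ⊆ RS.Rpos) : A ⊆ RS.PhiOf A :=
  fun β hβ => mem_PhiOf_of_mem_of_le hA hβ (hA hβ).1 (le.refl β)

lemma IsJAntichain.not_supportedOn (hA : RS.IsJAntichain J A) {β : E} (hβ : β ∈ A) :
    ¬RS.SupportedOn J β :=
  fun h => Set.eq_empty_iff_forall_notMem.1 hA.2.1 β ⟨hβ, h.mem_RposJ (hA.1 hβ)⟩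

lemma IsJAntichain.le_sub_simple (hA : RS.IsJAntichain J A) {β α : E} (hβ : β ∈ A)
    (hle : RS.le β α) {j : Fin n} (hj : j ∈ J) (hα : α - RS.simple j ∈ RS.R) :
    RS.le β (α - RS.simple j) := by
  refine le_sub_simple_of_sub_simple_notMem (hA.1 hβ) ?_ (hA.2.2.2 β hβ j hj) hle hα
  by_contra! h
  rcases RS.eq_or_sub_mem_of_inner_pos (hA.1 hβ).1 (RS.simple_mem j) h with rfl | h'
  · exact hA.not_supportedOn hβ
      (supportedOn_of_mem_closure (AddSubgroup.subset_closure ⟨j, hj, rfl⟩))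
  · exact hA.2.2.2 _ hβ j hj h'

lemma IsJAntichain.mem_PhiOf_of_le (hA : RS.IsJAntichain J A) {μ α : E}
    (hα : α ∈ RS.PhiOf A) (hμ : μ ∈ RS.Rpos) (hle : RS.le μ α)
    (hJ : RS.SupportedOn J (α - μ)) : μ ∈ RS.PhiOf A := by
  refine le_induction (P := fun μ α => α ∈ RS.PhiOf A → μ ∈ RS.PhiOf A) (fun _ h => h)
    ?_ ?_ hμ hα.1.1 hle hJ hα
  · intro μ α i hi hμ _ hμi ih hα
    obtain ⟨-, β, hβ, hle⟩ := ih hα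
    exact mem_PhiOf_of_mem_of_le hA.1 hβ hμ
      (by simpa using hA.le_sub_simple hβ hle hi (by rwa [add_sub_cancel_right]))
  · intro μ α i hi _ _ hαi ih hα
    obtain ⟨-, β, hβ, hle⟩ := hα
    exact ih (mem_PhiOf_of_mem_of_le hA.1 hβ hαi (hA.le_sub_simple hβ hle hi hαi))

theorem IsJAntichain.isJIdeal_PhiOf (hA : RS.IsJAntichain J A) :
    RS.IsJIdeal J (RS.PhiOf A) := by
  refine ⟨fun _ h => h.1, Set.eq_empty_iff_forall_notMem.2 ?_, ?_⟩
  · rintro α ⟨⟨-, β, hβ, hle⟩, hαJ⟩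
    exact hA.not_supportedOn hβ ((supportedOn_of_mem_closure hαJ.1.2).of_le (hA.1 hβ).2 hle)
  rintro α ⟨hα, β, hβ, hle⟩ x hx hαx
  by_cases hxQ : x ∈ RS.Qplus
  · exact mem_PhiOf_of_mem_of_le hA.1 hβ hαx (hle.add_right hxQ)
  obtain ⟨hxR, hxJ⟩ := hx.resolve_left fun h => hxQ h.2
  have hxle : RS.le (α + x) α := by
    have h : -x ∈ RS.Qplus := (RS.pos_or_neg x hxR).resolve_left hxQ
    simpa [le] using h
  have hxJ' : RS.SupportedOn J (α - (α + x)) := by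
    simpa using supportedOn_of_mem_closure (neg_mem hxJ)
  have hαxQ : α + x ∈ RS.Qplus := by
    refine (RS.pos_or_neg _ hαx).resolve_right fun (h : -(α + x) ∈ RS.Qplus) =>
      hA.not_supportedOn hβ ?_
    have hα_le : RS.le α (α - (α + x)) := by simpa [le, sub_eq_add_neg, add_comm] using h
    exact (hxJ'.of_le hα.2 hα_le).of_le (hA.1 hβ).2 hle
  exact hA.mem_PhiOf_of_le ⟨hα, β, hβ, hle⟩ ⟨hαx, hαxQ⟩ hxle hxJ'

theorem IsJAntichain.minimals_PhiOf (hA : RS.IsJAntichain J A) : RS.minimals (RS.PhiOf A) = A := by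
  ext γ
  constructor
  · rintro ⟨⟨-, β, hβ, hle⟩, hmin⟩
    rwa [← hmin β (subset_PhiOf hA.1 hβ) hle]
  · intro hγ
    refine ⟨subset_PhiOf hA.1 hγ, fun δ ⟨_, β, hβ, hβδ⟩ hδγ => ?_⟩
    obtain rfl : β = γ := by
      by_contra hne
      exact hA.2.2.1 β hβ γ hγ hne (hβδ.trans hδγ)
    exact hδγ.antisymm hβδ

end Antichain

section Ideal

variable {J : Set (Fin n)} {Φ : Set (EuclideanSpace ℝ (Fin n))}

lemma IsJIdeal.mem_of_le (hΦ : RS.IsJIdeal J Φ) {μ α : E} (hμ : μ ∈ Φ) (hα : α ∈ RS.R)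
    (hle : RS.le μ α) : α ∈ Φ := by
  refine le_induction (P := fun μ α => μ ∈ Φ → α ∈ Φ) (fun _ h => h) ?_ ?_ (hΦ.1 hμ) hα hle
    (supportedOn_univ _) hμ
  · intro μ α i _ _ _ hμi ih hμ
    exact ih (hΦ.2.2 μ hμ _ (Or.inl (RS.simple_mem_Rpos i)) hμi)
  · intro μ α i _ _ hα _ ih hμ
    simpa using hΦ.2.2 _ (ih hμ) _ (Or.inl (RS.simple_mem_Rpos i)) (by simpa using hα)

lemma exists_mem_minimals_le (hΦ : Φ ⊆ RS.Rpos) {α : E} (hα : α ∈ Φ) :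
    ∃ β ∈ RS.minimals Φ, RS.le β α := by
  obtain ⟨β, ⟨hβ, hβα⟩, hmin⟩ := Set.exists_min_image {γ ∈ Φ | RS.le γ α} RS.height
    (RS.finite.subset fun γ hγ => (hΦ hγ.1).1) ⟨α, hα, le.refl α⟩
  exact ⟨β, ⟨hβ, fun γ hγ hγβ => hγβ.eq_of_height_le (hmin γ ⟨hγ, hγβ.trans hβα⟩)⟩, hβα⟩

theorem IsJIdeal.isJAntichain_minimals (hΦ : RS.IsJIdeal J Φ) :
    RS.IsJAntichain J (RS.minimals Φ) := by
  refine ⟨fun _ h => hΦ.1 h.1, Set.eq_empty_iff_forall_notMem.2 fun α h =>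
    Set.eq_empty_iff_forall_notMem.1 hΦ.2.1 α ⟨h.1.1, h.2⟩,
    fun α hα β hβ hne hle => hne (hβ.2 α hα.1 hle), ?_⟩
  intro β hβ j hj hβj
  have hnegj : -RS.simple j ∈ RS.RJ J :=
    ⟨RS.neg_mem _ (RS.simple_mem j), neg_mem (AddSubgroup.subset_closure ⟨j, hj, rfl⟩)⟩
  have hmem : β - RS.simple j ∈ Φ := by
    simpa [sub_eq_add_neg] using
      hΦ.2.2 β hβ.1 _ (Or.inr hnegj) (by simpa [sub_eq_add_neg] using hβj)
  have := hβ.2 _ hmem (by simpa [le] using RS.simple_mem_Qplus j)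
  exact RS.ne_zero_of_mem (RS.simple_mem j) (by simpa using this)

theorem IsJIdeal.PhiOf_minimals (hΦ : RS.IsJIdeal J Φ) : RS.PhiOf (RS.minimals Φ) = Φ := by
  ext α
  constructor
  · rintro ⟨hα, β, hβ, hle⟩
    exact hΦ.mem_of_le hβ.1 hα.1 hle
  · intro hα
    obtain ⟨β, hβ, hle⟩ := exists_mem_minimals_le hΦ.1 hα
    exact ⟨hΦ.1 hα, β, hβ, hle⟩

end Ideal

end BasedRootSys

/-- `A ↦ Φ(A)` is a bijection from `J`-antichains to `J`-ideals, with inverse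
sending an ideal to its set of minimal elements. -/
theorem stmt_5 {n : ℕ} (RS : BasedRootSys n) (J : Set (Fin n)) :
    Set.BijOn (fun A => RS.PhiOf A) {A | RS.IsJAntichain J A} {Φ | RS.IsJIdeal J Φ} ∧
    (∀ A, RS.IsJAntichain J A → RS.minimals (RS.PhiOf A) = A) ∧
    (∀ Φ, RS.IsJIdeal J Φ → RS.PhiOf (RS.minimals Φ) = Φ) := by
  have inverse (A) (hA : RS.IsJAntichain J A) := hA.minimals_PhiOf
  refine ⟨⟨fun A (hA : RS.IsJAntichain J A) => hA.isJIdeal_PhiOf, ?_, ?_⟩, inverse,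
    fun Φ hΦ => hΦ.PhiOf_minimals⟩
  · intro A₁ h₁ A₂ h₂ h
    rw [← inverse A₁ h₁, ← inverse A₂ h₂]
    exact congrArg _ h
  · exact fun Φ (hΦ : RS.IsJIdeal J Φ) =>
      ⟨_, hΦ.isJAntichain_minimals, hΦ.PhiOf_minimals⟩
end

section
/- In the root system of type A_n, for each s ≥ 1 the abelian antichains with s elements are exactly the sets {α_{i_k, j_k} : 1 ≤ k ≤ s} with i_1 < i_2 < ... < i_s ≤ j_1 < j_2 < ... < j_s, where α_{i,j} = α_i + ... + α_j. In particular, the number of abelian antichains with s elements is C(n, 2s) + C(n, 2s-1). -/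
noncomputable section

/-- Standard basis vector `ε_i` of `ℝ^{n+1}`. -/
def eps (n : ℕ) (i : Fin (n + 1)) : EuclideanSpace ℝ (Fin (n + 1)) :=
  EuclideanSpace.single i 1

/-- The root system of type `A_n`: the vectors `ε_i - ε_j`, `i ≠ j`. -/
def typeA (n : ℕ) : Set (EuclideanSpace ℝ (Fin (n + 1))) :=
  {v | ∃ i j : Fin (n + 1), i ≠ j ∧ v = eps n i - eps n j}

/-- The positive roots of type `A_n`. -/
def posA (n : ℕ) : Set (EuclideanSpace ℝ (Fin (n + 1))) :=
  {v | ∃ i j : Fin (n + 1), i < j ∧ v = eps n i - eps n j}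

/-- The simple roots `α_i = ε_i - ε_{i+1}` of type `A_n`. -/
def simpleA (n : ℕ) (i : Fin n) : EuclideanSpace ℝ (Fin (n + 1)) :=
  eps n i.castSucc - eps n i.succ

/-- The positive root `α_{i,j} = α_i + ⋯ + α_j = ε_i - ε_{j+1}`. -/
def alphaA (n : ℕ) (i j : Fin n) : EuclideanSpace ℝ (Fin (n + 1)) :=
  eps n i.castSucc - eps n j.succ

/-- `Q⁺` for type `A_n`. -/
def QplusA (n : ℕ) : AddSubmonoid (EuclideanSpace ℝ (Fin (n + 1))) :=
  AddSubmonoid.closure (Set.range (simpleA n))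

/-- The dominance order for type `A_n`. -/
def leA (n : ℕ) (α β : EuclideanSpace ℝ (Fin (n + 1))) : Prop :=
  β - α ∈ QplusA n

/-- An antichain in the positive roots of type `A_n`. -/
def IsAntichainA (n : ℕ) (A : Set (EuclideanSpace ℝ (Fin (n + 1)))) : Prop :=
  A ⊆ posA n ∧ ∀ α ∈ A, ∀ β ∈ A, α ≠ β → ¬ leA n α β

/-- The ideal `Φ(A)` generated by `A`, for type `A_n`. -/
def PhiOfA (n : ℕ) (A : Set (EuclideanSpace ℝ (Fin (n + 1)))) :
    Set (EuclideanSpace ℝ (Fin (n + 1))) :=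
  {α ∈ posA n | ∃ β ∈ A, leA n β α}

/-- An abelian antichain in type `A_n`: an antichain whose generated ideal `Φ(A)`
contains no two (not necessarily distinct) elements summing to a root. -/
def IsAbelianAntichainA (n : ℕ) (A : Set (EuclideanSpace ℝ (Fin (n + 1)))) : Prop :=
  IsAntichainA n A ∧ ∀ α ∈ PhiOfA n A, ∀ β ∈ PhiOfA n A, α + β ∉ typeA n

end

/-!
Write the positive roots as `α_{i,j} = ε_i - ε_{j+1}`, i.e. as intervals `[i, j]`. The coefficient
of `α_a` in `v ∈ Q⁺` is the partial coordinate sum `∑_{b ≤ a} v_b`, so dominance is reverse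
inclusion: `α_{i,j} ≤ α_{k,l}` iff `k ≤ i` and `j ≤ l`. Comparing coordinates, `α_{i,j} + α_{k,l}`
is a root iff the two intervals are adjacent. Hence an antichain has distinct left ends, its right
ends increase with them, and its ideal is abelian iff `i_k ≤ j_l` for all `k, l`: if `j_l < i_k`,
then `α_{j_l+1, j_k}` lies in the ideal and is adjacent to `α_{i_l, j_l}`. Such families are the
`2s`-subsets `i_1 < ⋯ < i_s < j_1 + 1 < ⋯ < j_s + 1` of the `n + 1` coordinates, and
`C(n+1, 2s) = C(n, 2s) + C(n, 2s-1)`.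
-/

open Finset

theorem Fin.castAdd_lt_natAdd {m n : ℕ} (k : Fin m) (l : Fin n) :
    Fin.castAdd n k < Fin.natAdd m l := by
  rw [Fin.lt_def]; simp only [Fin.val_castAdd, Fin.val_natAdd]; omega

theorem Finset.exists_strictMono_range_eq_of_injOn_fst {α β : Type*} [LinearOrder α]
    [Preorder β] (P : Finset (α × β)) (hfst : Set.InjOn Prod.fst (P : Set (α × β)))
    (hmono : ∀ p ∈ P, ∀ q ∈ P, p.1 < q.1 → p.2 < q.2) :
    ∃ (f : Fin #P → α) (g : Fin #P → β), StrictMono f ∧ StrictMono g ∧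
      Set.range (fun k => (f k, g k)) = P := by
  classical
  have hcard : #(P.image Prod.fst) = #P := card_image_of_injOn hfst
  set f := (P.image Prod.fst).orderEmbOfFin hcard
  have hlift (k : Fin #P) : ∃ p ∈ P, p.1 = f k := mem_image.mp (orderEmbOfFin_mem _ hcard k)
  choose p hpP hpf using hlift
  have hp (k : Fin #P) : (f k, (p k).2) = p k := Prod.ext (hpf k).symm rfl
  refine ⟨f, fun k => (p k).2, f.strictMono, fun k l hkl => ?_, ?_⟩
  · exact hmono _ (hpP k) _ (hpP l) (by rw [hpf, hpf]; exact f.strictMono hkl)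
  · ext q
    refine ⟨by rintro ⟨k, rfl⟩; simp only [hp, mem_coe, hpP], fun hq => ?_⟩
    obtain ⟨k, hk⟩ : q.1 ∈ Set.range f := by
      rw [range_orderEmbOfFin]; exact mem_image_of_mem _ hq
    exact ⟨k, (hp k).trans (hfst (hpP k) hq ((hpf k).trans hk))⟩

namespace TypeA

variable {n : ℕ}

lemma eps_apply (i b : Fin (n + 1)) : eps n i b = if b = i then 1 else 0 := by
  simp [eps]

lemma leA_refl (α : EuclideanSpace ℝ (Fin (n + 1))) : leA n α α := by
  simp only [leA, sub_self, zero_mem]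

lemma eps_sub_eps_mem_QplusA {a b : Fin (n + 1)} (hab : a ≤ b) :
    eps n a - eps n b ∈ QplusA n := by
  induction b using Fin.induction with
  | zero => simp [Fin.le_zero_iff.mp hab, zero_mem]
  | succ c ih =>
    rcases hab.eq_or_lt with rfl | hlt
    · simp [zero_mem]
    · have hsplit : eps n a - eps n c.succ = (eps n a - eps n c.castSucc) + simpleA n c := by
        simp [simpleA]
      rw [hsplit]
      exact add_mem (ih (Fin.le_castSucc_iff.mpr hlt)) (AddSubmonoid.subset_closure ⟨c, rfl⟩)

/-- On the span of the simple roots, `partialSum (Fin.castSucc a)` is the coefficient of `α_a`. -/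
def partialSum (a : Fin (n + 1)) : EuclideanSpace ℝ (Fin (n + 1)) →+ ℝ where
  toFun v := ∑ b ∈ Iic a, v b
  map_zero' := by simp
  map_add' v w := by simp [sum_add_distrib]

lemma partialSum_eps (a c : Fin (n + 1)) :
    partialSum a (eps n c) = if c ≤ a then 1 else 0 := by
  simp [partialSum, eps_apply]

lemma partialSum_nonneg {v : EuclideanSpace ℝ (Fin (n + 1))} (hv : v ∈ QplusA n)
    (a : Fin (n + 1)) : 0 ≤ partialSum a v := by
  suffices QplusA n ≤ (AddSubmonoid.nonneg ℝ).comap (partialSum a) from this hv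
  refine AddSubmonoid.closure_le.mpr ?_
  rintro _ ⟨i, rfl⟩
  have hi : i.castSucc < i.succ := Fin.castSucc_lt_succ
  simp only [SetLike.mem_coe, AddSubmonoid.mem_comap, AddSubmonoid.mem_nonneg, simpleA, map_sub,
    partialSum_eps]
  split_ifs with h1 <;> first | exact absurd (hi.le.trans ‹i.succ ≤ a›) h1 | norm_num

lemma alphaA_le_alphaA_iff {i j k l : Fin n} (hij : i ≤ j) (hkl : k ≤ l) :
    leA n (alphaA n i j) (alphaA n k l) ↔ k ≤ i ∧ j ≤ l := by
  constructor
  · intro h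
    have key (a : Fin (n + 1)) := partialSum_nonneg h a
    simp only [alphaA, map_sub, partialSum_eps] at key
    -- if `k > i` the coefficient of `α_i` in the difference is `-1`, if `l < j` that of `α_j` is
    constructor
    · by_contra hki
      have := key i.castSucc
      simp only [Fin.le_def, Fin.val_castSucc, Fin.val_succ] at this hki hij hkl
      split_ifs at this <;> first | omega | norm_num at this
    · by_contra hjl
      have := key j.castSucc
      simp only [Fin.le_def, Fin.val_castSucc, Fin.val_succ] at this hjl hij hkl
      split_ifs at this <;> first | omega | norm_num at this
  · rintro ⟨hki, hjl⟩
    have hsplit : alphaA n k l - alphaA n i j =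
        (eps n k.castSucc - eps n i.castSucc) + (eps n j.succ - eps n l.succ) := by
      simp only [alphaA]; abel
    rw [leA, hsplit]
    exact add_mem (eps_sub_eps_mem_QplusA (Fin.castSucc_le_castSucc_iff.mpr hki))
      (eps_sub_eps_mem_QplusA (Fin.succ_le_succ_iff.mpr hjl))

lemma alphaA_inj {i j k l : Fin n} (hij : i ≤ j) (hkl : k ≤ l) :
    alphaA n i j = alphaA n k l ↔ i = k ∧ j = l := by
  refine ⟨fun h => ?_, by rintro ⟨rfl, rfl⟩; rfl⟩
  have h₁ := (alphaA_le_alphaA_iff hij hkl).mp (h ▸ leA_refl _)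
  have h₂ := (alphaA_le_alphaA_iff hkl hij).mp (h ▸ leA_refl _)
  exact ⟨le_antisymm h₂.1 h₁.1, le_antisymm h₁.2 h₂.2⟩

lemma mem_posA_iff {v : EuclideanSpace ℝ (Fin (n + 1))} :
    v ∈ posA n ↔ ∃ i j, i ≤ j ∧ alphaA n i j = v := by
  constructor
  · rintro ⟨p, q, hpq, rfl⟩
    refine ⟨p.castPred (Fin.ne_last_of_lt hpq), q.pred (Fin.ne_zero_of_lt hpq),
      (Fin.castPred_le_pred_iff _ _).mpr hpq, ?_⟩
    simp [alphaA]
  · rintro ⟨i, j, hij, rfl⟩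
    exact ⟨i.castSucc, j.succ, Fin.castSucc_lt_succ_iff.mpr hij, rfl⟩

lemma eq_or_eq_of_eps_sub_add_eps_sub_mem_typeA {a b c d : Fin (n + 1)} (hab : a ≠ b)
    (hcd : c ≠ d) (h : eps n a - eps n b + (eps n c - eps n d) ∈ typeA n) : b = c ∨ d = a := by
  obtain ⟨p, q, hpq, h⟩ := h
  by_contra! hne
  have ha := congrArg (· a) h
  have hc := congrArg (· c) h
  simp only [PiLp.add_apply, PiLp.sub_apply, eps_apply] at ha hc
  by_cases hac : a = c
  · subst hac
    simp only [if_pos, hab, hcd, if_false] at ha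
    split_ifs at ha <;> norm_num at ha
  -- otherwise the coordinates at `a` and at `c` are both `1`, forcing `a = p = c`
  · simp only [if_pos, hab, hac, hne.2.symm, if_false] at ha
    simp only [if_pos, Ne.symm hac, hne.1.symm, hcd, if_false] at hc
    have hap : a = p := by split_ifs at ha <;> first | assumption | norm_num at ha
    have hcp : c = p := by split_ifs at hc <;> first | assumption | norm_num at hc
    exact hac (hap.trans hcp.symm)

lemma alphaA_add_alphaA_mem_typeA_iff {i j k l : Fin n} (hij : i ≤ j) (hkl : k ≤ l) :
    alphaA n i j + alphaA n k l ∈ typeA n ↔ j.succ = k.castSucc ∨ l.succ = i.castSucc := by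
  refine ⟨eq_or_eq_of_eps_sub_add_eps_sub_mem_typeA (Fin.castSucc_lt_succ_iff.mpr hij).ne
    (Fin.castSucc_lt_succ_iff.mpr hkl).ne, ?_⟩
  have hadj {i j k l : Fin n} (hij : i ≤ j) (hkl : k ≤ l) (h : j.succ = k.castSucc) :
      alphaA n i j + alphaA n k l ∈ typeA n := by
    refine ⟨i.castSucc, l.succ, ?_, by simp only [alphaA, h]; abel⟩
    have : i.castSucc < k.castSucc := (Fin.castSucc_lt_succ_iff.mpr hij).trans_eq h
    exact (this.trans_le (Fin.castSucc_lt_succ_iff.mpr hkl).le).ne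
  rintro (h | h)
  · exact hadj hij hkl h
  · exact add_comm (alphaA n i j) _ ▸ hadj hkl hij h

section Antichains

variable {s : ℕ} {ii jj : Fin s → Fin n}

lemma isAbelianAntichainA_range (hii : StrictMono ii) (hjj : StrictMono jj)
    (hcross : ∀ k l, ii k ≤ jj l) :
    IsAbelianAntichainA n (Set.range fun k => alphaA n (ii k) (jj k)) := by
  have hroot (k : Fin s) : ii k ≤ jj k := hcross k k
  refine ⟨⟨?_, ?_⟩, ?_⟩
  · rintro _ ⟨k, rfl⟩
    exact mem_posA_iff.mpr ⟨ii k, jj k, hroot k, rfl⟩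
  · rintro _ ⟨k, rfl⟩ _ ⟨l, rfl⟩ hne hle
    rw [alphaA_le_alphaA_iff (hroot k) (hroot l)] at hle
    exact hne (by rw [le_antisymm (hjj.le_iff_le.mp hle.2) (hii.le_iff_le.mp hle.1)])
  · rintro _ ⟨hα, _, ⟨k, rfl⟩, hkα⟩ _ ⟨hβ, _, ⟨l, rfl⟩, hlβ⟩
    obtain ⟨a, b, hab, rfl⟩ := mem_posA_iff.mp hα
    obtain ⟨c, d, hcd, rfl⟩ := mem_posA_iff.mp hβ
    rw [alphaA_le_alphaA_iff (hroot k) hab] at hkα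
    rw [alphaA_le_alphaA_iff (hroot l) hcd] at hlβ
    rw [alphaA_add_alphaA_mem_typeA_iff hab hcd]
    rintro (h | h)
    · have hcb : c ≤ b := hlβ.1.trans ((hcross l k).trans hkα.2)
      exact (Fin.castSucc_lt_succ_iff.mpr hcb).ne' h
    · have had : a ≤ d := hkα.1.trans ((hcross k l).trans hlβ.2)
      exact (Fin.castSucc_lt_succ_iff.mpr had).ne' h

lemma ncard_range_alphaA (hii : StrictMono ii) (hcross : ∀ k l, ii k ≤ jj l) :
    (Set.range fun k => alphaA n (ii k) (jj k)).ncard = s := by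
  have hinj : Function.Injective fun k => alphaA n (ii k) (jj k) := fun k l h =>
    hii.injective ((alphaA_inj (hcross k k) (hcross l l)).mp h).1
  rw [Set.ncard_range_of_injective hinj, Nat.card_eq_fintype_card, Fintype.card_fin]

end Antichains

lemma exists_strictMono_of_isAbelianAntichainA {s : ℕ} {A : Set (EuclideanSpace ℝ (Fin (n + 1)))}
    (hA : IsAbelianAntichainA n A) (hs : A.ncard = s) :
    ∃ ii jj : Fin s → Fin n, StrictMono ii ∧ StrictMono jj ∧ (∀ k l, ii k ≤ jj l) ∧
      A = Set.range fun k => alphaA n (ii k) (jj k) := by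
  classical
  obtain ⟨⟨hpos, hanti⟩, habel⟩ := hA
  set P : Finset (Fin n × Fin n) := {p : Fin n × Fin n | p.1 ≤ p.2 ∧ alphaA n p.1 p.2 ∈ A}
  have hmemP {p : Fin n × Fin n} : p ∈ P ↔ p.1 ≤ p.2 ∧ alphaA n p.1 p.2 ∈ A := by simp [P]
  have hAP : A = (fun p : Fin n × Fin n => alphaA n p.1 p.2) '' P := by
    ext v
    refine ⟨fun hv => ?_, by rintro ⟨p, hp, rfl⟩; exact (hmemP.mp hp).2⟩
    obtain ⟨i, j, hij, rfl⟩ := mem_posA_iff.mp (hpos hv)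
    exact ⟨(i, j), hmemP.mpr ⟨hij, hv⟩, rfl⟩
  have hinj : Set.InjOn (fun p : Fin n × Fin n => alphaA n p.1 p.2) P := fun p hp q hq h =>
    Prod.ext_iff.mpr ((alphaA_inj (hmemP.mp hp).1 (hmemP.mp hq).1).mp h)
  have hcomparable {p q : Fin n × Fin n} (hp : p ∈ P) (hq : q ∈ P) (hqp : p.1 ≤ q.1)
      (hpq : q.2 ≤ p.2) : p = q := by
    by_contra hne
    exact hanti _ (hmemP.mp hq).2 _ (hmemP.mp hp).2 (fun h => hne (hinj hp hq h.symm))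
      ((alphaA_le_alphaA_iff (hmemP.mp hq).1 (hmemP.mp hp).1).mpr ⟨hqp, hpq⟩)
  have hfst : Set.InjOn Prod.fst (P : Set (Fin n × Fin n)) := fun p hp q hq h => by
    rcases le_total p.2 q.2 with h' | h'
    · exact (hcomparable hq hp h.ge h').symm
    · exact hcomparable hp hq h.le h'
  have hmono : ∀ p ∈ P, ∀ q ∈ P, p.1 < q.1 → p.2 < q.2 := fun p hp q hq h => by
    by_contra! h'
    exact h.ne (congrArg Prod.fst (hcomparable hp hq h.le h'))
  have hcard : #P = s := by
    rw [← hs, hAP, hinj.ncard_image, Set.ncard_coe_finset]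
  subst hcard
  obtain ⟨ii, jj, hii, hjj, hrange⟩ := P.exists_strictMono_range_eq_of_injOn_fst hfst hmono
  have hmem (k : Fin #P) : (ii k, jj k) ∈ P := by rw [← mem_coe, ← hrange]; exact ⟨k, rfl⟩
  have hroot (k : Fin #P) : ii k ≤ jj k := (hmemP.mp (hmem k)).1
  refine ⟨ii, jj, hii, hjj, fun k l => ?_, by rw [hAP, ← hrange, ← Set.range_comp]; rfl⟩
  by_contra! hlk
  -- `α_{jj l + 1, jj k}` lies above `α_{ii k, jj k}`, and adding it to `α_{ii l, jj l}` gives a root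
  set m : Fin n := ⟨jj l + 1, by have := (ii k).isLt; rw [Fin.lt_def] at hlk; omega⟩
  have hm : m.castSucc = (jj l).succ := rfl
  have hmk : m ≤ ii k := by rw [Fin.lt_def] at hlk; exact Fin.le_def.mpr hlk
  refine habel _ ⟨hpos (hmemP.mp (hmem l)).2, _, (hmemP.mp (hmem l)).2, leA_refl _⟩
    (alphaA n m (jj k)) ⟨mem_posA_iff.mpr ⟨_, _, hmk.trans (hroot k), rfl⟩, _,
      (hmemP.mp (hmem k)).2, (alphaA_le_alphaA_iff (hroot k) (hmk.trans (hroot k))).mpr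
        ⟨hmk, le_rfl⟩⟩ ?_
  exact (alphaA_add_alphaA_mem_typeA_iff (hroot l) (hmk.trans (hroot k))).mpr (Or.inl hm.symm)

section Counting

variable {s : ℕ}

/-- For `x₁ < ⋯ < x_{2s}` this is `{ε_{x_k} - ε_{x_{s+k}}}`; in the notation of the theorem
`x_k = i_k` and `x_{s+k} = j_k + 1`. -/
def rootsOfEmb (f : Fin (s + s) ↪o Fin (n + 1)) : Set (EuclideanSpace ℝ (Fin (n + 1))) :=
  Set.range fun k => eps n (f (Fin.castAdd s k)) - eps n (f (Fin.natAdd s k))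

lemma range_rootsOfEmb :
    Set.range (rootsOfEmb (n := n) (s := s)) = {A | ∃ ii jj : Fin s → Fin n, StrictMono ii ∧
      StrictMono jj ∧ (∀ k l, ii k ≤ jj l) ∧ A = Set.range fun k => alphaA n (ii k) (jj k)} := by
  ext A
  constructor
  · rintro ⟨f, rfl⟩
    have hlt (k l : Fin s) : f (Fin.castAdd s k) < f (Fin.natAdd s l) :=
      f.strictMono (Fin.castAdd_lt_natAdd k l)
    refine ⟨fun k => (f (Fin.castAdd s k)).castPred (Fin.ne_last_of_lt (hlt k k)),
      fun k => (f (Fin.natAdd s k)).pred (Fin.ne_zero_of_lt (hlt k k)),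
      fun k l hkl => Fin.castPred_lt_castPred_iff.mpr (f.strictMono (Fin.strictMono_castAdd s hkl)),
      fun k l hkl => Fin.pred_lt_pred_iff.mpr (f.strictMono (Fin.strictMono_natAdd s hkl)),
      fun k l => (Fin.castPred_le_pred_iff _ _).mpr (hlt k l), ?_⟩
    simp only [rootsOfEmb, alphaA, Fin.castSucc_castPred, Fin.succ_pred]
  · rintro ⟨ii, jj, hii, hjj, hcross, rfl⟩
    have hmono : StrictMono (Fin.append (Fin.castSucc ∘ ii) (Fin.succ ∘ jj)) := by
      intro x y hxy
      induction x using Fin.addCases <;> induction y using Fin.addCases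
      all_goals simp only [Fin.append_left, Fin.append_right, Function.comp_apply]
      · exact hii ((Fin.strictMono_castAdd s).lt_iff_lt.mp hxy)
      · exact Fin.castSucc_lt_succ_iff.mpr (hcross _ _)
      · exact absurd hxy (Fin.castAdd_lt_natAdd _ _).not_gt
      · exact Fin.succ_lt_succ_iff.mpr (hjj ((Fin.strictMono_natAdd s).lt_iff_lt.mp hxy))
    exact ⟨OrderEmbedding.ofStrictMono _ hmono, by
      simp only [rootsOfEmb, alphaA, OrderEmbedding.coe_ofStrictMono, Fin.append_left,
        Fin.append_right, Function.comp_apply]⟩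

lemma range_eq_support_rootsOfEmb (f : Fin (s + s) ↪o Fin (n + 1)) :
    Set.range f = {p | ∃ v ∈ rootsOfEmb f, v p ≠ 0} := by
  have hne (k : Fin s) : f (Fin.castAdd s k) ≠ f (Fin.natAdd s k) :=
    (f.strictMono (Fin.castAdd_lt_natAdd k k)).ne
  ext p
  constructor
  · rintro ⟨x, rfl⟩
    induction x using Fin.addCases with
    | left k =>
      refine ⟨_, ⟨k, rfl⟩, ?_⟩
      simp only [PiLp.sub_apply, eps_apply, if_pos, if_neg (hne k)]
      norm_num
    | right k =>
      refine ⟨_, ⟨k, rfl⟩, ?_⟩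
      simp only [PiLp.sub_apply, eps_apply, if_pos, if_neg (hne k).symm]
      norm_num
  · rintro ⟨_, ⟨k, rfl⟩, hp⟩
    by_cases h₁ : p = f (Fin.castAdd s k)
    · exact ⟨_, h₁.symm⟩
    by_cases h₂ : p = f (Fin.natAdd s k)
    · exact ⟨_, h₂.symm⟩
    simp only [PiLp.sub_apply, eps_apply, if_neg h₁, if_neg h₂, sub_self, ne_eq,
      not_true_eq_false] at hp

lemma rootsOfEmb_injective : Function.Injective (rootsOfEmb (n := n) (s := s)) := by
  intro f g h
  have hrange : Set.range f = Set.range g := by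
    rw [range_eq_support_rootsOfEmb, range_eq_support_rootsOfEmb, h]
  exact DFunLike.coe_injective ((f.strictMono.range_inj g.strictMono).mp hrange)

lemma ncard_range_rootsOfEmb :
    (Set.range (rootsOfEmb (n := n) (s := s))).ncard = (n + 1).choose (s + s) := by
  rw [Set.ncard_range_of_injective rootsOfEmb_injective,
    Nat.card_congr Set.powersetCard.ofFinEmbEquiv, Set.powersetCard.card, Nat.card_eq_fintype_card,
    Fintype.card_fin]

end Counting

end TypeA

/-- In type `A_n`, for `s ≥ 1` the abelian antichains of cardinality `s` are exactly
the sets `{α_{i_k, j_k}}` with `i_1 < ⋯ < i_s ≤ j_1 < ⋯ < j_s`, and there are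
`C(n, 2s) + C(n, 2s-1)` of them. -/
theorem stmt_8 (n s : ℕ) (hs : 1 ≤ s) :
    ({A : Set (EuclideanSpace ℝ (Fin (n + 1))) |
        IsAbelianAntichainA n A ∧ A.ncard = s} =
      {A | ∃ ii jj : Fin s → Fin n, StrictMono ii ∧ StrictMono jj ∧
        (∀ k l : Fin s, ii k ≤ jj l) ∧
        A = Set.range fun k => alphaA n (ii k) (jj k)}) ∧
    {A : Set (EuclideanSpace ℝ (Fin (n + 1))) |
        IsAbelianAntichainA n A ∧ A.ncard = s}.ncard =
      n.choose (2 * s) + n.choose (2 * s - 1) := by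
  have hset : {A : Set (EuclideanSpace ℝ (Fin (n + 1))) | IsAbelianAntichainA n A ∧ A.ncard = s} =
      {A | ∃ ii jj : Fin s → Fin n, StrictMono ii ∧ StrictMono jj ∧
        (∀ k l : Fin s, ii k ≤ jj l) ∧ A = Set.range fun k => alphaA n (ii k) (jj k)} := by
    ext A
    refine ⟨fun ⟨hA, hcard⟩ => TypeA.exists_strictMono_of_isAbelianAntichainA hA hcard, ?_⟩
    rintro ⟨ii, jj, hii, hjj, hcross, rfl⟩
    exact ⟨TypeA.isAbelianAntichainA_range hii hjj hcross, TypeA.ncard_range_alphaA hii hcross⟩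
  refine ⟨hset, ?_⟩
  rw [hset, ← TypeA.range_rootsOfEmb, TypeA.ncard_range_rootsOfEmb,
    show s + s = 2 * s - 1 + 1 by omega, Nat.choose_succ_succ', Nat.sub_add_cancel (by omega),
    add_comm]
end

section
/- In the root system of type C_n, the total number of abelian antichains in R⁺ (including the empty one) is 2^n. -/
/-!
An abelian antichain contains no root `ε_i - ε_j` (`i < j`): its ideal would also contain
`ε_i + ε_j`, and the two add up to the root `2ε_i`. Conversely, any ideal generated by roots
`ε_i + ε_j` (`i ≤ j`) is abelian, since a sum of two of them has coordinate sum `4` while every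
root has coordinate sum at most `2`. On these roots dominance is the reverse of the product order
on `(i, j)`, so abelian antichains are exactly the families of pairwise strictly nested intervals
`[i, j]`. Such a family is determined by its set `T` of endpoints, which can be any subset of
`{1, …, n}`: the `k`-th smallest element of `T` is paired with the `k`-th largest.
-/

noncomputable section

/-- Standard basis vector `ε_i` of `ℝ^n`. -/
def epsC (n : ℕ) (i : Fin n) : EuclideanSpace ℝ (Fin n) :=
  EuclideanSpace.single i 1

/-- The root system of type `C_n`: `±ε_i ± ε_j` (`i ≠ j`) and `±2ε_i`. -/
def typeC (n : ℕ) : Set (EuclideanSpace ℝ (Fin n)) :=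
  {v | (∃ i j : Fin n, i ≠ j ∧
          (v = epsC n i - epsC n j ∨ v = epsC n i + epsC n j ∨
            v = -(epsC n i + epsC n j))) ∨
       (∃ i : Fin n, v = (2 : ℝ) • epsC n i ∨ v = -((2 : ℝ) • epsC n i))}

/-- The positive roots of type `C_n`: `ε_i - ε_j` (`i < j`), `ε_i + ε_j` (`i < j`)
and `2ε_i`. -/
def posC (n : ℕ) : Set (EuclideanSpace ℝ (Fin n)) :=
  {v | (∃ i j : Fin n, i < j ∧ (v = epsC n i - epsC n j ∨ v = epsC n i + epsC n j)) ∨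
       (∃ i : Fin n, v = (2 : ℝ) • epsC n i)}

/-- The simple roots of type `C_n`: `α_i = ε_i - ε_{i+1}` for `i < n`, and
`α_n = 2ε_n`. -/
def simpleC (n : ℕ) (i : Fin n) : EuclideanSpace ℝ (Fin n) :=
  if h : (i : ℕ) + 1 < n then epsC n i - epsC n ⟨(i : ℕ) + 1, h⟩
  else (2 : ℝ) • epsC n i

/-- `Q⁺` for type `C_n`. -/
def QplusC (n : ℕ) : AddSubmonoid (EuclideanSpace ℝ (Fin n)) :=
  AddSubmonoid.closure (Set.range (simpleC n))

/-- The dominance order for type `C_n`. -/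
def leC (n : ℕ) (α β : EuclideanSpace ℝ (Fin n)) : Prop :=
  β - α ∈ QplusC n

/-- An antichain in the positive roots of type `C_n`. -/
def IsAntichainC (n : ℕ) (A : Set (EuclideanSpace ℝ (Fin n))) : Prop :=
  A ⊆ posC n ∧ ∀ α ∈ A, ∀ β ∈ A, α ≠ β → ¬ leC n α β

/-- The ideal `Φ(A)` generated by `A`, for type `C_n`. -/
def PhiOfC (n : ℕ) (A : Set (EuclideanSpace ℝ (Fin n))) :
    Set (EuclideanSpace ℝ (Fin n)) :=
  {α ∈ posC n | ∃ β ∈ A, leC n β α}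

/-- An abelian antichain in type `C_n`. -/
def IsAbelianAntichainC (n : ℕ) (A : Set (EuclideanSpace ℝ (Fin n))) : Prop :=
  IsAntichainC n A ∧ ∀ α ∈ PhiOfC n A, ∀ β ∈ PhiOfC n A, α + β ∉ typeC n

end

open Finset

namespace Finset

variable {α : Type*} [LinearOrder α]

lemma filter_eq_map_orderEmbOfFin (s : Finset α) (P : α → Prop) [DecidablePred P] :
    s.filter P =
      (univ.filter fun i => P (s.orderEmbOfFin rfl i)).map (s.orderEmbOfFin rfl).toEmbedding := by
  conv_lhs => rw [← map_orderEmbOfFin_univ s rfl]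
  rw [filter_map]
  rfl

lemma card_filter_lt_orderEmbOfFin (s : Finset α) (i : Fin s.card) :
    (s.filter (· < s.orderEmbOfFin rfl i)).card = i := by
  rw [filter_eq_map_orderEmbOfFin, card_map]
  simp only [OrderEmbedding.lt_iff_lt]
  rw [filter_gt_eq_Iio, Fin.card_Iio]

lemma card_filter_orderEmbOfFin_lt (s : Finset α) (i : Fin s.card) :
    (s.filter (s.orderEmbOfFin rfl i < ·)).card = s.card - 1 - i := by
  rw [filter_eq_map_orderEmbOfFin, card_map]
  simp only [OrderEmbedding.lt_iff_lt]
  rw [filter_lt_eq_Ioi, Fin.card_Ioi]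

end Finset

section Nested

variable {α : Type*} [LinearOrder α]

/-- A family of intervals `[p.1, p.2]`, any two of which are strictly nested. -/
def IsNested (S : Set (α × α)) : Prop :=
  (∀ p ∈ S, p.1 ≤ p.2) ∧ IsAntichain (· ≤ ·) S

open Classical in
noncomputable def endpoints [Fintype α] (S : Set (α × α)) : Finset α :=
  univ.filter fun x => ∃ p ∈ S, p.1 = x ∨ p.2 = x

lemma mem_endpoints [Fintype α] {S : Set (α × α)} {x : α} :
    x ∈ endpoints S ↔ ∃ p ∈ S, p.1 = x ∨ p.2 = x := by
  simp [endpoints]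

def nestedPairs (T : Finset α) : Set (α × α) :=
  (fun i => (T.orderEmbOfFin rfl i, T.orderEmbOfFin rfl i.rev)) '' {i | i ≤ i.rev}

namespace IsNested

variable {S : Set (α × α)}

lemma injOn_fst (hS : IsNested S) : Set.InjOn Prod.fst S := by
  intro p hp q hq h
  rcases le_total p.2 q.2 with hle | hle
  · exact hS.2.eq hp hq ⟨h.le, hle⟩
  · exact hS.2.eq' hp hq ⟨h.ge, hle⟩

lemma injOn_snd (hS : IsNested S) : Set.InjOn Prod.snd S := by
  intro p hp q hq h
  rcases le_total p.1 q.1 with hle | hle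
  · exact hS.2.eq hp hq ⟨hle, h.le⟩
  · exact hS.2.eq' hp hq ⟨hle, h.ge⟩

lemma fst_lt_iff_lt_snd (hS : IsNested S) {p q : α × α} (hp : p ∈ S) (hq : q ∈ S) :
    p.1 < q.1 ↔ q.2 < p.2 := by
  constructor
  · intro h
    by_contra! h'
    exact h.ne (congrArg Prod.fst (hS.2.eq hp hq ⟨h.le, h'⟩))
  · intro h
    by_contra! h'
    exact h.ne (congrArg Prod.snd (hS.2.eq hq hp ⟨h', h.le⟩))

/-- Both sides count the intervals of `S` that strictly contain `q`. -/
lemma card_endpoints_lt_fst_eq_card_snd_lt [Fintype α] (hS : IsNested S) {q : α × α} (hq : q ∈ S) :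
    ((endpoints S).filter (· < q.1)).card = ((endpoints S).filter (q.2 < ·)).card := by
  set L := {p ∈ S | p.1 < q.1}
  have hfst : (((endpoints S).filter (· < q.1) : Finset α) : Set α) = Prod.fst '' L := by
    ext x
    simp only [coe_filter, mem_endpoints, Set.mem_ofPred_eq, Set.mem_image, L]
    constructor
    · rintro ⟨⟨p, hp, rfl | rfl⟩, hx⟩
      · exact ⟨p, ⟨hp, hx⟩, rfl⟩
      · have := (hS.fst_lt_iff_lt_snd hp hq).mp ((hS.1 p hp).trans_lt hx)
        exact absurd (hx.trans_le (hS.1 q hq)) this.not_gt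
    · rintro ⟨p, ⟨hp, hx⟩, rfl⟩
      exact ⟨⟨p, hp, Or.inl rfl⟩, hx⟩
  have hL : L = {p ∈ S | q.2 < p.2} :=
    Set.ext fun p => and_congr_right (hS.fst_lt_iff_lt_snd · hq)
  have hsnd : (((endpoints S).filter (q.2 < ·) : Finset α) : Set α) = Prod.snd '' L := by
    ext x
    simp only [coe_filter, mem_endpoints, Set.mem_ofPred_eq, Set.mem_image, hL]
    constructor
    · rintro ⟨⟨p, hp, rfl | rfl⟩, hx⟩
      · have := (hS.fst_lt_iff_lt_snd hp hq).mpr (hx.trans_le (hS.1 p hp))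
        exact absurd (hx.trans this) (hS.1 q hq).not_gt
      · exact ⟨p, ⟨hp, hx⟩, rfl⟩
    · rintro ⟨p, ⟨hp, hx⟩, rfl⟩
      exact ⟨⟨p, hp, Or.inr rfl⟩, hx⟩
  rw [← Set.ncard_coe_finset, hfst, (hS.injOn_fst.mono fun _ h => h.1).ncard_image,
    ← Set.ncard_coe_finset, hsnd, (hS.injOn_snd.mono fun _ h => h.1).ncard_image]

lemma subset_nestedPairs_endpoints [Fintype α] (hS : IsNested S) :
    S ⊆ nestedPairs (endpoints S) := by
  intro q hq
  set σ := (endpoints S).orderEmbOfFin rfl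
  obtain ⟨i, hi⟩ : q.1 ∈ Set.range σ := by
    rw [range_orderEmbOfFin]
    exact mem_endpoints.mpr ⟨q, hq, Or.inl rfl⟩
  obtain ⟨j, hj⟩ : q.2 ∈ Set.range σ := by
    rw [range_orderEmbOfFin]
    exact mem_endpoints.mpr ⟨q, hq, Or.inr rfl⟩
  have hcard := hS.card_endpoints_lt_fst_eq_card_snd_lt hq
  rw [← hi, ← hj, card_filter_lt_orderEmbOfFin, card_filter_orderEmbOfFin_lt] at hcard
  have hji : j = i.rev := Fin.ext (by rw [Fin.val_rev]; omega)
  have hij : i ≤ i.rev := by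
    rw [← hji, ← σ.le_iff_le, hi, hj]
    exact hS.1 q hq
  exact ⟨i, hij, Prod.ext hi (by rw [← hj, hji])⟩

lemma eq_of_subset_of_endpoints_subset [Fintype α] (hS : IsNested S) {R : Set (α × α)} (hRS : R ⊆ S)
    (h : endpoints S ⊆ endpoints R) : R = S := by
  refine hRS.antisymm fun q hq => ?_
  obtain ⟨p, hp, hpq | hpq⟩ := mem_endpoints.mp (h (mem_endpoints.mpr ⟨q, hq, Or.inl rfl⟩))
  · rwa [← hS.injOn_fst (hRS hp) hq hpq]
  · have hle : p ≤ q := ⟨(hS.1 p (hRS hp)).trans hpq.le, hpq.le.trans (hS.1 q hq)⟩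
    rwa [← hS.2.eq (hRS hp) hq hle]

end IsNested

lemma isNested_nestedPairs (T : Finset α) : IsNested (nestedPairs T) := by
  set σ := T.orderEmbOfFin rfl
  refine ⟨?_, ?_⟩
  · rintro _ ⟨i, hi, rfl⟩
    exact σ.le_iff_le.mpr hi
  · rintro _ ⟨i, -, rfl⟩ _ ⟨j, -, rfl⟩ hne ⟨hle, hle_rev⟩
    have hij : i ≤ j := σ.le_iff_le.mp hle
    have hji : j ≤ i := Fin.rev_le_rev.mp (σ.le_iff_le.mp hle_rev)
    exact hne (by rw [le_antisymm hij hji])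

lemma endpoints_nestedPairs [Fintype α] (T : Finset α) : endpoints (nestedPairs T) = T := by
  set σ := T.orderEmbOfFin rfl
  ext x
  rw [mem_endpoints]
  constructor
  · rintro ⟨_, ⟨i, -, rfl⟩, rfl | rfl⟩ <;> exact T.orderEmbOfFin_mem rfl _
  · intro hx
    obtain ⟨i, rfl⟩ : x ∈ Set.range σ := by rwa [range_orderEmbOfFin]
    rcases le_total i i.rev with h | h
    · exact ⟨_, ⟨i, h, rfl⟩, Or.inl rfl⟩
    · refine ⟨_, ⟨i.rev, ?_, rfl⟩, Or.inr ?_⟩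
      · rwa [Set.mem_ofPred_eq, Fin.rev_rev]
      · simp only [Fin.rev_rev, σ]

lemma IsNested.nestedPairs_endpoints [Fintype α] {S : Set (α × α)} (hS : IsNested S) :
    nestedPairs (endpoints S) = S :=
  ((isNested_nestedPairs _).eq_of_subset_of_endpoints_subset hS.subset_nestedPairs_endpoints
    (endpoints_nestedPairs _).le).symm

noncomputable def nestedEquivFinset [Fintype α] : {S : Set (α × α) // IsNested S} ≃ Finset α where
  toFun S := endpoints S.1
  invFun T := ⟨nestedPairs T, isNested_nestedPairs T⟩
  left_inv S := Subtype.ext S.2.nestedPairs_endpoints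
  right_inv := endpoints_nestedPairs

end Nested

section RootsC

variable {n : ℕ}

noncomputable def plusRootC (n : ℕ) (p : Fin n × Fin n) : EuclideanSpace ℝ (Fin n) :=
  epsC n p.1 + epsC n p.2

lemma sum_epsC_apply (s : Finset (Fin n)) (i : Fin n) :
    ∑ m ∈ s, epsC n i m = if i ∈ s then 1 else 0 := by
  simp [epsC]

lemma sum_plusRootC_apply (s : Finset (Fin n)) (p : Fin n × Fin n) :
    ∑ m ∈ s, plusRootC n p m = (if p.1 ∈ s then 1 else 0) + (if p.2 ∈ s then 1 else 0) := by
  simp only [plusRootC, PiLp.add_apply, sum_add_distrib, sum_epsC_apply]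

lemma sum_apply_nonneg_of_mem_QplusC {s : Finset (Fin n)} (hs : IsLowerSet (s : Set (Fin n)))
    {v : EuclideanSpace ℝ (Fin n)} (hv : v ∈ QplusC n) : 0 ≤ ∑ m ∈ s, v m := by
  induction hv using AddSubmonoid.closure_induction with
  | mem x hx =>
    obtain ⟨i, rfl⟩ := hx
    unfold simpleC
    split_ifs with h
    · have hle : i ≤ ⟨i + 1, h⟩ := Fin.le_def.mpr (Nat.le_succ _)
      simp only [PiLp.sub_apply, sum_sub_distrib, sum_epsC_apply]
      by_cases hs' : (⟨i + 1, h⟩ : Fin n) ∈ s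
      · have hi : i ∈ s := hs hle hs'
        simp [hs', hi]
      · split_ifs <;> norm_num
    · simp only [PiLp.smul_apply, smul_eq_mul, ← mul_sum, sum_epsC_apply]
      split_ifs <;> norm_num
  | zero => simp
  | add x y _ _ hx hy =>
    simp only [PiLp.add_apply, sum_add_distrib]
    positivity

lemma sum_apply_le_of_leC {s : Finset (Fin n)} (hs : IsLowerSet (s : Set (Fin n)))
    {v w : EuclideanSpace ℝ (Fin n)} (h : leC n v w) : ∑ m ∈ s, v m ≤ ∑ m ∈ s, w m := by
  have := sum_apply_nonneg_of_mem_QplusC hs h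
  simp only [PiLp.sub_apply, sum_sub_distrib] at this
  linarith

lemma leC_refl (v : EuclideanSpace ℝ (Fin n)) : leC n v v := by
  rw [leC, sub_self]
  exact zero_mem _

lemma epsC_sub_epsC_mem_QplusC {i j : Fin n} (h : i ≤ j) : epsC n i - epsC n j ∈ QplusC n := by
  obtain ⟨j, hj⟩ := j
  induction j, (show (i : ℕ) ≤ j from h) using Nat.le_induction with
  | base =>
    rw [Fin.eta, sub_self]
    exact zero_mem _
  | succ m hm ih =>
    have hsimple : simpleC n ⟨m, by omega⟩ = epsC n ⟨m, by omega⟩ - epsC n ⟨m + 1, hj⟩ := by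
      rw [simpleC, dif_pos hj]
    have := add_mem (ih (by omega) hm) (AddSubmonoid.subset_closure ⟨_, hsimple⟩)
    rwa [sub_add_sub_cancel] at this

lemma two_smul_epsC_mem_QplusC (i : Fin n) : (2 : ℝ) • epsC n i ∈ QplusC n := by
  have hn : n - 1 < n := by have := i.2; omega
  have hsimple : simpleC n ⟨n - 1, hn⟩ = (2 : ℝ) • epsC n ⟨n - 1, hn⟩ := by
    rw [simpleC, dif_neg (show ¬(n - 1 + 1 < n) by omega)]
  have hsub := epsC_sub_epsC_mem_QplusC (Fin.le_def.mpr (Nat.le_sub_one_of_lt i.2) :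
    i ≤ ⟨n - 1, hn⟩)
  convert add_mem (add_mem hsub hsub) (AddSubmonoid.subset_closure ⟨_, hsimple⟩) using 1
  rw [two_smul, two_smul]
  abel

lemma mem_posC_iff {v : EuclideanSpace ℝ (Fin n)} :
    v ∈ posC n ↔ (∃ i j : Fin n, i < j ∧ v = epsC n i - epsC n j) ∨
      ∃ p : Fin n × Fin n, p.1 ≤ p.2 ∧ v = plusRootC n p := by
  constructor
  · rintro (⟨i, j, hij, rfl | rfl⟩ | ⟨i, rfl⟩)
    · exact Or.inl ⟨i, j, hij, rfl⟩
    · exact Or.inr ⟨(i, j), hij.le, rfl⟩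
    · exact Or.inr ⟨(i, i), le_rfl, two_smul ℝ _⟩
  · rintro (⟨i, j, hij, rfl⟩ | ⟨⟨i, j⟩, hij, rfl⟩)
    · exact Or.inl ⟨i, j, hij, Or.inl rfl⟩
    · rcases (show i ≤ j from hij).eq_or_lt with rfl | hlt
      · exact Or.inr ⟨i, (two_smul ℝ _).symm⟩
      · exact Or.inl ⟨i, j, hlt, Or.inr rfl⟩

lemma leC_plusRootC_iff {p q : Fin n × Fin n} (hp : p.1 ≤ p.2) (hq : q.1 ≤ q.2) :
    leC n (plusRootC n p) (plusRootC n q) ↔ q ≤ p := by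
  constructor
  · intro h
    have key (t : Fin n) : (if p.1 ≤ t then (1 : ℝ) else 0) + (if p.2 ≤ t then 1 else 0) ≤
        (if q.1 ≤ t then 1 else 0) + (if q.2 ≤ t then 1 else 0) := by
      have hlower : IsLowerSet ((Iic t : Finset (Fin n)) : Set (Fin n)) := by
        rw [coe_Iic]
        exact isLowerSet_Iic t
      simpa only [sum_plusRootC_apply, mem_Iic] using sum_apply_le_of_leC hlower h
    constructor
    · by_contra! hlt
      have := key p.1
      rw [if_pos le_rfl, if_neg hlt.not_ge, if_neg (hlt.trans_le hq).not_ge] at this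
      split_ifs at this <;> linarith
    · by_contra! hlt
      have := key p.2
      rw [if_pos hp, if_pos le_rfl, if_neg hlt.not_ge] at this
      split_ifs at this <;> linarith
  · rintro ⟨h1, h2⟩
    have hdiff : plusRootC n q - plusRootC n p =
        (epsC n q.1 - epsC n p.1) + (epsC n q.2 - epsC n p.2) := by
      simp only [plusRootC]
      abel
    rw [leC, hdiff]
    exact add_mem (epsC_sub_epsC_mem_QplusC h1) (epsC_sub_epsC_mem_QplusC h2)

lemma plusRootC_injOn : Set.InjOn (plusRootC n) {p | p.1 ≤ p.2} := fun _ hp _ hq h =>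
  le_antisymm ((leC_plusRootC_iff hq hp).mp (h ▸ leC_refl _))
    ((leC_plusRootC_iff hp hq).mp (h ▸ leC_refl _))

lemma sum_univ_plusRootC_apply (p : Fin n × Fin n) : ∑ m, plusRootC n p m = 2 := by
  rw [sum_plusRootC_apply]
  norm_num

lemma plusRootC_add_plusRootC_notMem_typeC (p q : Fin n × Fin n) :
    plusRootC n p + plusRootC n q ∉ typeC n := by
  intro h
  have hsum : ∑ m, (plusRootC n p + plusRootC n q) m = 4 := by
    simp only [PiLp.add_apply, sum_add_distrib, sum_univ_plusRootC_apply]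
    norm_num
  have : ∑ m, (plusRootC n p + plusRootC n q) m ≤ 2 := by
    rcases h with ⟨i, j, -, h | h | h⟩ | ⟨i, h | h⟩ <;> rw [h] <;>
      simp [sum_sub_distrib, sum_add_distrib, sum_neg_distrib, sum_epsC_apply, ← mul_sum] <;>
      norm_num
  linarith

end RootsC

section AbelianAntichains

variable {n : ℕ} {A : Set (EuclideanSpace ℝ (Fin n))}

lemma IsAbelianAntichainC.epsC_sub_epsC_notMem (hA : IsAbelianAntichainC n A) {i j : Fin n}
    (hij : i < j) : epsC n i - epsC n j ∉ A := by
  intro hmem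
  have hminus : epsC n i - epsC n j ∈ PhiOfC n A :=
    ⟨Or.inl ⟨i, j, hij, Or.inl rfl⟩, _, hmem, leC_refl _⟩
  have hplus : plusRootC n (i, j) ∈ PhiOfC n A := by
    refine ⟨Or.inl ⟨i, j, hij, Or.inr rfl⟩, _, hmem, ?_⟩
    have hdiff : plusRootC n (i, j) - (epsC n i - epsC n j) = (2 : ℝ) • epsC n j := by
      simp only [plusRootC, two_smul]
      abel
    rw [leC, hdiff]
    exact two_smul_epsC_mem_QplusC j
  refine hA.2 _ hminus _ hplus (Or.inr ⟨i, Or.inl ?_⟩)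
  simp only [plusRootC, two_smul]
  abel

lemma IsAbelianAntichainC.subset_image (hA : IsAbelianAntichainC n A) :
    A ⊆ plusRootC n '' {p | p.1 ≤ p.2} := by
  intro v hv
  rcases mem_posC_iff.mp (hA.1.1 hv) with ⟨i, j, hij, rfl⟩ | ⟨p, hp, rfl⟩
  · exact absurd hv (hA.epsC_sub_epsC_notMem hij)
  · exact ⟨p, hp, rfl⟩

/-- Dominance can only increase the coordinate sum, which is `2` on `A` and `0` on `ε_i - ε_j`. -/
lemma PhiOfC_subset_image (hA : A ⊆ plusRootC n '' {p | p.1 ≤ p.2}) :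
    PhiOfC n A ⊆ plusRootC n '' {p | p.1 ≤ p.2} := by
  rintro γ ⟨hγ, β, hβ, hβγ⟩
  obtain ⟨p, -, rfl⟩ := hA hβ
  rcases mem_posC_iff.mp hγ with ⟨i, j, -, rfl⟩ | ⟨q, hq, rfl⟩
  · have hle := sum_apply_le_of_leC (by rw [coe_univ]; exact isLowerSet_univ) hβγ
    simp only [sum_univ_plusRootC_apply, PiLp.sub_apply, sum_sub_distrib, sum_epsC_apply,
      mem_univ, if_true] at hle
    norm_num at hle
  · exact ⟨q, hq, rfl⟩

lemma isAbelianAntichainC_image {S : Set (Fin n × Fin n)} (hS : IsNested S) :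
    IsAbelianAntichainC n (plusRootC n '' S) := by
  have himage : plusRootC n '' S ⊆ plusRootC n '' {p | p.1 ≤ p.2} := Set.image_mono hS.1
  refine ⟨⟨fun v hv => ?_, ?_⟩, ?_⟩
  · obtain ⟨p, hp, rfl⟩ := himage hv
    exact mem_posC_iff.mpr (Or.inr ⟨p, hp, rfl⟩)
  · rintro _ ⟨p, hp, rfl⟩ _ ⟨q, hq, rfl⟩ hne hle
    rw [leC_plusRootC_iff (hS.1 p hp) (hS.1 q hq)] at hle
    exact hne (congrArg _ (hS.2.eq' hp hq hle))
  · intro α hα β hβ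
    obtain ⟨p, -, rfl⟩ := PhiOfC_subset_image himage hα
    obtain ⟨q, -, rfl⟩ := PhiOfC_subset_image himage hβ
    exact plusRootC_add_plusRootC_notMem_typeC p q

lemma IsAbelianAntichainC.isNested_preimage (hA : IsAbelianAntichainC n A) :
    IsNested {p : Fin n × Fin n | p.1 ≤ p.2 ∧ plusRootC n p ∈ A} := by
  refine ⟨fun p hp => hp.1, fun p hp q hq hne hle => ?_⟩
  refine hA.1.2 _ hq.2 _ hp.2 (fun h => hne (plusRootC_injOn hp.1 hq.1 h.symm)) ?_
  exact (leC_plusRootC_iff hq.1 hp.1).mpr hle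

noncomputable def abelianAntichainEquivNested (n : ℕ) :
    {A : Set (EuclideanSpace ℝ (Fin n)) // IsAbelianAntichainC n A} ≃
      {S : Set (Fin n × Fin n) // IsNested S} where
  toFun A := ⟨{p | p.1 ≤ p.2 ∧ plusRootC n p ∈ A.1}, A.2.isNested_preimage⟩
  invFun S := ⟨plusRootC n '' S.1, isAbelianAntichainC_image S.2⟩
  left_inv A := by
    ext v
    constructor
    · rintro ⟨p, ⟨-, hp⟩, rfl⟩
      exact hp
    · intro hv
      obtain ⟨p, hp, rfl⟩ := A.2.subset_image hv
      exact ⟨p, ⟨hp, hv⟩, rfl⟩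
  right_inv S := by
    ext p
    constructor
    · rintro ⟨hp, q, hq, hqp⟩
      rwa [← plusRootC_injOn (S.2.1 q hq) hp hqp]
    · intro hp
      exact ⟨S.2.1 p hp, p, hp, rfl⟩

end AbelianAntichains

/-- In type `C_n`, the total number of abelian antichains in `R⁺`
(including the empty one) is `2^n`. -/
theorem stmt_10 (n : ℕ) :
    {A : Set (EuclideanSpace ℝ (Fin n)) | IsAbelianAntichainC n A}.ncard =
      2 ^ n := by
  rw [← Nat.card_coe_set_eq]
  calc Nat.card _ = Nat.card (Finset (Fin n)) :=
        Nat.card_congr ((abelianAntichainEquivNested n).trans nestedEquivFinset)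
    _ = 2 ^ n := by rw [Nat.card_eq_fintype_card, Fintype.card_finset, Fintype.card_fin]
end
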